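/- arXiv:1102.3822 — 5 statements merged into one kernel-verified Lean document; each statement's English description precedes it below -/
import Mathlib

section
/- Consider the RP chain with p = 0 started from a configuration with exactly one vertex in state false, and let T = min{t ≥ 0 : S_t is the constant-false configuration}. Then T has the same distribution as Y_1 + ⋯ + Y_{n−1}, where Y_1, …, Y_{n−1} are independent random variables each geometrically distributed on {1, 2, 3, …} with success probability 2/n (i.e. P(Y = t) = (1 − 2/n)^{t−1}·(2/n) for t ≥ 1); in particular E[T] = n(n−1)/2. -/
open scoped Classical

/-- A configuration of the `n`-cycle: `true` = cooperate, `false` = defect. -/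
abbrev Config (n : ℕ) := ZMod n → Bool

/-- Probability that, when the edge `{i, i+1}` is selected for play, the
Rational Pavlov update turns configuration `S` into configuration `T`. -/
noncomputable def rpUpdProb (p : ℝ) {n : ℕ} (S : Config n) (i : ZMod n) (T : Config n) : ℝ :=
  if S i = true ∧ S (i + 1) = true then
    (if T = S then 1 else 0)
  else if S i = false ∧ S (i + 1) = false then
    (if ∀ j : ZMod n, j ≠ i → j ≠ i + 1 → T j = S j then
      (if T i = true then p else 1 - p) * (if T (i + 1) = true then p else 1 - p)
    else 0)
  else
    (if T = Function.update (Function.update S i false) (i + 1) false then 1 else 0)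

/-- One-step transition probability of the Rational Pavlov chain on the `n`-cycle:
an edge `{i, i+1}` is chosen uniformly at random and the two players update. -/
noncomputable def rpStepProb (p : ℝ) {n : ℕ} [NeZero n] (S T : Config n) : ℝ :=
  (1 / (n : ℝ)) * ∑ i : ZMod n, rpUpdProb p S i T

/-- Probability that the Rational Pavlov chain started at `S0`, run for `t` steps,
produces a trajectory `σ : Fin (t+1) → Config n` satisfying the event `E`. -/
noncomputable def rpTrajProb (p : ℝ) {n : ℕ} [NeZero n] (S0 : Config n) (t : ℕ)
    (E : (Fin (t + 1) → Config n) → Prop) : ℝ :=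
  ∑ σ : Fin (t + 1) → Config n,
    (if σ 0 = S0 ∧ E σ then ∏ s : Fin t, rpStepProb p (σ s.castSucc) (σ s.succ) else 0)

/-- Probability that the first hitting time of the all-defect configuration equals `t`. -/
noncomputable def rpFirstHitAllDefectProb {n : ℕ} [NeZero n] (p : ℝ) (S0 : Config n)
    (t : ℕ) : ℝ :=
  rpTrajProb p S0 t
    (fun σ => σ (Fin.last t) = (fun _ => false) ∧
      ∀ s : Fin (t + 1), σ s = (fun _ => false) → s = Fin.last t)

/-- Probability that the sum of `n-1` independent geometric random variables on
`{1, 2, 3, …}` with success probability `2/n` equals `t`. -/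
noncomputable def geomSumProb (n t : ℕ) : ℝ :=
  ∑ y : Fin (n - 1) → Fin (t + 1),
    if (∀ i, 1 ≤ (y i : ℕ)) ∧ (∑ i, (y i : ℕ)) = t then
      ∏ i, ((1 - 2 / (n : ℝ)) ^ ((y i : ℕ) - 1) * (2 / (n : ℝ)))
    else 0

/-!
With `p = 0` no vertex ever starts to cooperate, so from a single defector the defectors always
form an arc of consecutive vertices. An arc of `k < n` defectors grows by one vertex exactly when
one of the two edges at its ends is chosen, which happens with probability `2/n` at every step,
and is left unchanged otherwise. Conditioning on the first step, the law of the hitting time from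
an arc of `k` defectors therefore satisfies the first-trial recursion of the sum of `n - k`
independent geometric(`2/n`) variables. The mean follows from the closed form
`C(t-1, m-1) q^m (1-q)^(t-m)` of that law and the binomial series.
-/

open Finset

/-- `negBinom q m t` is the probability that a sum of `m` independent geometric(`q`) variables on
`{1, 2, …}` equals `t`, computed by conditioning on the first trial. -/
noncomputable def negBinom (q : ℝ) : ℕ → ℕ → ℝ
  | 0, t => if t = 0 then 1 else 0
  | _ + 1, 0 => 0
  | m + 1, t + 1 => q * negBinom q m t + (1 - q) * negBinom q (m + 1) t

noncomputable def geomProb (q : ℝ) : ℕ → ℝ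
  | 0 => 0
  | c + 1 => (1 - q) ^ c * q

namespace negBinom

variable (q : ℝ)

theorem succ_of_le {m t : ℕ} (h : t ≤ m) : negBinom q (m + 1) t = 0 := by
  induction t generalizing m with
  | zero => rfl
  | succ t ih =>
    obtain ⟨m, rfl⟩ : ∃ m', m = m' + 1 := ⟨m - 1, by omega⟩
    rw [negBinom, ih (by omega), ih (by omega), mul_zero, mul_zero, add_zero]

theorem succ_add (m u : ℕ) :
    negBinom q (m + 1) (u + m + 1) = (u + m).choose m * q ^ (m + 1) * (1 - q) ^ u := by
  induction m generalizing u with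
  | zero =>
    induction u with
    | zero => simp [negBinom]
    | succ u ih =>
      rw [negBinom, ih, negBinom, if_neg u.succ_ne_zero, Nat.choose_zero_right,
        Nat.choose_zero_right]
      ring
  | succ m ihm =>
    induction u with
    | zero =>
      rw [negBinom, show 0 + (m + 1) = 0 + m + 1 by ring, ihm, succ_of_le q (by omega)]
      simp only [zero_add, Nat.choose_self]
      ring
    | succ u ihu =>
      have pascal : ((u + 1 + (m + 1)).choose (m + 1) : ℝ) =
          (u + 1 + m).choose m + (u + (m + 1)).choose (m + 1) := by
        rw [show u + 1 + (m + 1) = u + 1 + m + 1 by ring, Nat.choose_succ_succ',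
          show u + 1 + m = u + (m + 1) by ring, Nat.cast_add]
      have ihm' := ihm (u + 1)
      rw [show u + 1 + m + 1 = u + 1 + (m + 1) by ring] at ihm'
      rw [show u + (m + 1) + 1 = u + 1 + (m + 1) by ring] at ihu
      rw [negBinom, ihm', ihu, pascal]
      ring

theorem succ_eq_sum_antidiagonal (m t : ℕ) :
    negBinom q (m + 1) t = ∑ p ∈ antidiagonal t, geomProb q p.1 * negBinom q m p.2 := by
  have shifted (t : ℕ) : negBinom q (m + 1) (t + 1) =
      ∑ p ∈ antidiagonal t, (1 - q) ^ p.1 * q * negBinom q m p.2 := by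
    induction t with
    | zero => simp [negBinom]
    | succ t ih =>
      rw [negBinom, ih, Nat.sum_antidiagonal_succ, mul_sum]
      simp only [pow_succ]
      ring_nf
  cases t with
  | zero => simp [geomProb, negBinom]
  | succ t =>
    rw [Nat.sum_antidiagonal_succ, shifted]
    simp [geomProb]

theorem hasSum_mul {q : ℝ} (hq : |1 - q| < 1) (m : ℕ) :
    HasSum (fun t => t * negBinom q m t) (m / q) := by
  have hq0 : q ≠ 0 := by rintro rfl; norm_num at hq
  cases m with
  | zero =>
    convert hasSum_zero with t
    · cases t <;> simp [negBinom]
    · simp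
  | succ m =>
    rw [← hasSum_nat_add_iff' (m + 1), sum_eq_zero fun t ht =>
      by rw [succ_of_le q (mem_range_succ_iff.mp ht), mul_zero], sub_zero]
    have term (u : ℕ) : ((u + (m + 1) : ℕ) : ℝ) * negBinom q (m + 1) (u + (m + 1)) =
        (m + 1) * q ^ (m + 1) * ((u + (m + 1)).choose (m + 1) * (1 - q) ^ u) := by
      have absorb : ((u + m + 1 : ℕ) : ℝ) * (u + m).choose m =
          (u + m + 1).choose (m + 1) * (m + 1) := by
        exact_mod_cast Nat.add_one_mul_choose_eq (u + m) m
      rw [← add_assoc, succ_add]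
      linear_combination q ^ (m + 1) * (1 - q) ^ u * absorb
    have value : ((m + 1 : ℕ) : ℝ) / q =
        (m + 1) * q ^ (m + 1) * (1 / (1 - (1 - q)) ^ (m + 1 + 1)) := by
      rw [sub_sub_cancel]
      field_simp
      push_cast
      ring
    simp_rw [term, value]
    exact (hasSum_choose_mul_geometric_of_norm_lt_one (m + 1) (r := 1 - q)
      (by rwa [Real.norm_eq_abs])).mul_left _

end negBinom

theorem sum_prod_geomProb_eq_negBinom (q : ℝ) {B t : ℕ} (ht : t ≤ B) (m : ℕ) :
    (∑ y : Fin m → Fin (B + 1), if ∑ i, (y i : ℕ) = t then ∏ i, geomProb q (y i) else 0) =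
      negBinom q m t := by
  induction m generalizing t with
  | zero => cases t <;> simp [negBinom]
  | succ m ih =>
    have sum_tail (c : Fin (B + 1)) : (∑ y : Fin m → Fin (B + 1),
        if ∑ i, ((Fin.cons c y : Fin (m + 1) → Fin (B + 1)) i : ℕ) = t then
          ∏ i, geomProb q ((Fin.cons c y : Fin (m + 1) → Fin (B + 1)) i) else 0) =
        if (c : ℕ) ≤ t then geomProb q c * negBinom q m (t - c) else 0 := by
      simp only [Fin.sum_univ_succ, Fin.prod_univ_succ, Fin.cons_zero, Fin.cons_succ]
      split_ifs with hc
      · rw [← ih (show t - c ≤ B by omega), mul_sum]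
        refine sum_congr rfl fun y _ => ?_
        rw [mul_ite, mul_zero]
        exact if_congr (by omega) rfl rfl
      · exact sum_eq_zero fun y _ => if_neg (by omega)
    rw [negBinom.succ_eq_sum_antidiagonal, Nat.sum_antidiagonal_eq_sum_range_succ_mk,
      ← (Fin.consEquiv fun _ => Fin (B + 1)).sum_comp, Fintype.sum_prod_type]
    simp only [Fin.consEquiv_apply, sum_tail]
    rw [Fin.sum_univ_eq_sum_range
        (fun c => if c ≤ t then geomProb q c * negBinom q m (t - c) else 0),
      ← sum_range_add_sum_Ico _ (show t + 1 ≤ B + 1 by omega),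
      sum_eq_zero (s := Ico _ _) fun k hk => if_neg (by rw [mem_Ico] at hk; omega), add_zero]
    exact sum_congr rfl fun k hk => if_pos (by rw [mem_range] at hk; omega)

theorem geomSumProb_eq_negBinom (n t : ℕ) : geomSumProb n t = negBinom (2 / n) (n - 1) t := by
  rw [geomSumProb, ← sum_prod_geomProb_eq_negBinom _ le_rfl]
  refine sum_congr rfl fun y _ => ?_
  by_cases hpos : ∀ i, 1 ≤ (y i : ℕ)
  · refine if_congr (and_iff_right hpos) (prod_congr rfl fun i _ => ?_) rfl
    obtain ⟨c, hc⟩ : ∃ c, (y i : ℕ) = c + 1 := ⟨y i - 1, by have := hpos i; omega⟩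
    rw [hc, geomProb, Nat.add_sub_cancel]
  · obtain ⟨i, hi⟩ := not_forall.mp hpos
    rw [if_neg fun h => by have := h.1 i; omega, eq_comm, ite_eq_right_iff]
    exact fun _ => prod_eq_zero (mem_univ i) (by rw [show (y i : ℕ) = 0 by omega]; rfl)

section FirstStep

variable {n : ℕ} [NeZero n] (p : ℝ)

theorem rpTrajProb_succ (S0 : Config n) (t : ℕ) (E : (Fin (t + 2) → Config n) → Prop) :
    rpTrajProb p S0 (t + 1) E =
      ∑ T, rpStepProb p S0 T * rpTrajProb p T t (fun τ => E (Fin.cons S0 τ)) := by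
  simp only [rpTrajProb, mul_sum, mul_ite, mul_zero]
  rw [sum_comm, ← (Fin.consEquiv fun _ => Config n).sum_comp, Fintype.sum_prod_type,
    sum_eq_single S0 (fun c _ hc => sum_eq_zero fun τ _ => if_neg (by simp [hc])) (by simp)]
  refine sum_congr rfl fun τ _ => ?_
  rw [sum_eq_single (τ 0) (fun T _ hT => if_neg (by tauto)) (by simp)]
  simp only [Fin.consEquiv_apply, Fin.cons_zero, true_and, Fin.prod_univ_succ]
  rfl

theorem rpFirstHitAllDefectProb_zero (S : Config n) :
    rpFirstHitAllDefectProb p S 0 = if S = (fun _ => false) then 1 else 0 := by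
  rw [rpFirstHitAllDefectProb, rpTrajProb, sum_eq_single (fun _ => S)]
  · simp [Fin.forall_fin_one]
  · intro σ _ hσ
    exact if_neg fun h => hσ (funext fun s => by rw [Fin.fin_one_eq_zero s, h.1])
  · simp

theorem rpFirstHitAllDefectProb_allDefect_succ (t : ℕ) :
    rpFirstHitAllDefectProb p (fun _ : ZMod n => false) (t + 1) = 0 :=
  sum_eq_zero fun _ _ => if_neg fun ⟨h0, _, hlast⟩ => Fin.last_pos.ne (hlast 0 h0)

theorem rpFirstHitAllDefectProb_succ {S : Config n} (hS : S ≠ fun _ => false) (t : ℕ) :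
    rpFirstHitAllDefectProb p S (t + 1) =
      ∑ T, rpStepProb p S T * rpFirstHitAllDefectProb p T t := by
  rw [rpFirstHitAllDefectProb, rpTrajProb_succ]
  refine sum_congr rfl fun T _ => congrArg _ (congrArg _ (funext fun τ => ?_))
  simp [Fin.forall_fin_succ, ← Fin.succ_last, hS]

end FirstStep

section Deterministic

variable {n : ℕ}

noncomputable def rpUpdZero (S : Config n) (i : ZMod n) : Config n :=
  if S i = true ∧ S (i + 1) = true then S
  else Function.update (Function.update S i false) (i + 1) false

theorem rpUpdZero_of_eq {S : Config n} {i : ZMod n} (h : S i = S (i + 1)) :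
    rpUpdZero S i = S := by
  unfold rpUpdZero
  cases hi : S i
  · rw [if_neg (by simp), ← hi, Function.update_eq_self, h, Function.update_eq_self]
  · rw [if_pos ⟨rfl, h ▸ hi⟩]

theorem rpUpdZero_of_ne {S : Config n} {i : ZMod n} (h : S i ≠ S (i + 1)) :
    rpUpdZero S i = Function.update (Function.update S i false) (i + 1) false :=
  if_neg fun ⟨hi, hi1⟩ => h (hi.trans hi1.symm)

theorem rpUpdProb_zero (S : Config n) (i : ZMod n) (T : Config n) :
    rpUpdProb 0 S i T = if T = rpUpdZero S i then 1 else 0 := by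
  rw [rpUpdProb]
  cases hi : S i <;> cases hi1 : S (i + 1)
  · rw [rpUpdZero_of_eq (hi.trans hi1.symm)]
    by_cases hT : T = S
    · subst hT
      simp [hi, hi1]
    · rw [if_neg hT]
      simp only [Bool.false_eq_true, and_self, if_false, if_true, sub_zero]
      refine ite_eq_right_iff.mpr fun hall => ?_
      have hcoop : T i = true ∨ T (i + 1) = true := by
        by_contra! hdef
        simp only [ne_eq, Bool.not_eq_true] at hdef
        refine hT (funext fun j => ?_)
        by_cases hj : j = i
        · rw [hj, hi, hdef.1]
        by_cases hj1 : j = i + 1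
        · rw [hj1, hi1, hdef.2]
        exact hall j hj hj1
      rcases hcoop with h | h <;> simp [h]
  all_goals simp [rpUpdZero, hi, hi1]

theorem sum_rpStepProb_zero_mul [NeZero n] (S : Config n) (f : Config n → ℝ) :
    ∑ T, rpStepProb 0 S T * f T = (1 / n) * ∑ i, f (rpUpdZero S i) := by
  simp only [rpStepProb, rpUpdProb_zero, mul_assoc, ← mul_sum, sum_mul]
  rw [sum_comm]
  simp

end Deterministic

section Arcs

variable {n : ℕ}

theorem add_natCast_add_one (s : ZMod n) (x : ℕ) :
    s + (x : ZMod n) + 1 = s + ((x + 1 : ℕ) : ZMod n) := by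
  push_cast
  ring

theorem add_natCast_inj (s : ZMod n) {x y : ℕ} (hx : x < n) (hy : y < n) :
    s + (x : ZMod n) = s + y ↔ x = y := by
  rw [add_right_inj, ZMod.natCast_eq_natCast_iff', Nat.mod_eq_of_lt hx, Nat.mod_eq_of_lt hy]

/-- The configuration whose defectors are exactly `s, s + 1, …, s + (k - 1)`. -/
def defectArc (s : ZMod n) (k : ℕ) : Config n := fun j => decide (k ≤ (j - s).val)

theorem defectArc_add_natCast (s : ZMod n) (k : ℕ) {y : ℕ} (hy : y < n) :
    defectArc s k (s + y) = decide (k ≤ y) := by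
  rw [defectArc, add_sub_cancel_left, ZMod.val_natCast_of_lt hy]

theorem rpUpdZero_defectArc_of_ne (s : ZMod n) {k x : ℕ} (hx : x + 1 < n) (hxk : x + 1 ≠ k) :
    rpUpdZero (defectArc s k) (s + x) = defectArc s k := by
  refine rpUpdZero_of_eq ?_
  rw [add_natCast_add_one, defectArc_add_natCast s k hx, defectArc_add_natCast s k (by omega)]
  exact decide_eq_decide.mpr (by omega)

theorem defectArc_ne_allDefect (s : ZMod n) {k : ℕ} (hk : k < n) :
    defectArc s k ≠ fun _ => false := fun h => by
  simpa [defectArc_add_natCast s k (show n - 1 < n by omega), show k ≤ n - 1 by omega]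
    using congrFun h (s + (n - 1 : ℕ))

theorem eq_defectArc_one_of_existsUnique {S : Config n} (hS : ∃! i, S i = false) :
    ∃ v, S = defectArc v 1 := by
  obtain ⟨v, hv, huniq⟩ := hS
  refine ⟨v, funext fun j => ?_⟩
  simp only [defectArc, Nat.one_le_iff_ne_zero, ne_eq, ZMod.val_eq_zero, sub_eq_zero]
  by_cases hj : j = v
  · simp [hj, hv]
  · simpa [hj] using mt (huniq j) hj

variable [NeZero n]

theorem exists_eq_add_natCast (s j : ZMod n) : ∃ y < n, j = s + (y : ZMod n) :=
  ⟨(j - s).val, ZMod.val_lt _, by rw [ZMod.natCast_zmod_val, add_sub_cancel]⟩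

theorem sum_zmod_eq_sum_range {M : Type*} [AddCommMonoid M] (s : ZMod n) (g : ZMod n → M) :
    ∑ i, g i = ∑ x ∈ range n, g (s + x) := by
  refine (sum_nbij' (s := range n) (t := univ) (s + ·) (fun i => (i - s).val)
    (by simp) (by simp [ZMod.val_lt]) (fun x hx => ?_) (by simp) (by simp)).symm
  simp [ZMod.val_natCast_of_lt (mem_range.mp hx)]

theorem defectArc_of_le (s : ZMod n) {k : ℕ} (hk : n ≤ k) : defectArc s k = fun _ => false :=
  funext fun j => decide_eq_false (by have := ZMod.val_lt (j - s); omega)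

theorem rpUpdZero_defectArc_right (s : ZMod n) {k : ℕ} (hk : 1 ≤ k) (hkn : k < n) :
    rpUpdZero (defectArc s k) (s + (k - 1 : ℕ)) = defectArc s (k + 1) := by
  have hnext : s + ((k - 1 : ℕ) : ZMod n) + 1 = s + (k : ℕ) := by
    rw [add_natCast_add_one, Nat.sub_add_cancel hk]
  rw [rpUpdZero_of_ne (by rw [hnext, defectArc_add_natCast s k (by omega),
    defectArc_add_natCast s k hkn, ne_eq, decide_eq_decide]; omega)]
  funext j
  obtain ⟨y, hy, rfl⟩ := exists_eq_add_natCast s j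
  simp only [Function.update_apply, hnext, add_natCast_inj s hy hkn,
    add_natCast_inj s hy (show k - 1 < n by omega), defectArc_add_natCast s _ hy]
  split_ifs <;> simp only [eq_comm (a := false), decide_eq_false_iff_not, decide_eq_decide] <;>
    omega

theorem rpUpdZero_defectArc_left (s : ZMod n) {k : ℕ} (hk : 1 ≤ k) (hkn : k < n) :
    rpUpdZero (defectArc s k) (s + (n - 1 : ℕ)) = defectArc (s - 1) (k + 1) := by
  have hnext : s + ((n - 1 : ℕ) : ZMod n) + 1 = s + (0 : ℕ) := by
    rw [add_natCast_add_one, Nat.sub_add_cancel (by omega), ZMod.natCast_self, Nat.cast_zero]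
  rw [rpUpdZero_of_ne (by rw [hnext, defectArc_add_natCast s k (by omega),
    defectArc_add_natCast s k (by omega), ne_eq, decide_eq_decide]; omega)]
  funext j
  obtain ⟨y, hy, rfl⟩ := exists_eq_add_natCast s j
  have hshifted : defectArc (s - 1) (k + 1) (s + (y : ZMod n)) =
      decide (k + 1 ≤ (y + 1) % n) := by
    rw [defectArc, show s + (y : ZMod n) - (s - 1) = ((y + 1 : ℕ) : ZMod n) by push_cast; ring,
      ZMod.val_natCast]
  simp only [Function.update_apply, hnext, add_natCast_inj s hy (show 0 < n by omega),
    add_natCast_inj s hy (show n - 1 < n by omega), defectArc_add_natCast s _ hy, hshifted]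
  split_ifs with h0 hlast
  · rw [h0, Nat.mod_eq_of_lt (by omega), eq_comm, decide_eq_false_iff_not]
    omega
  · rw [hlast, Nat.sub_add_cancel (by omega), Nat.mod_self, eq_comm, decide_eq_false_iff_not]
    omega
  · rw [Nat.mod_eq_of_lt (by omega), decide_eq_decide]
    omega

theorem sum_rpUpdZero_defectArc (s : ZMod n) {k : ℕ} (hk : 1 ≤ k) (hkn : k < n)
    (f : Config n → ℝ) : ∑ i, f (rpUpdZero (defectArc s k) i) =
      f (defectArc s (k + 1)) + f (defectArc (s - 1) (k + 1)) + (n - 2) * f (defectArc s k) := by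
  have hleft : n - 1 ∈ range n := mem_range.mpr (by omega)
  have hright : k - 1 ∈ (range n).erase (n - 1) :=
    mem_erase.mpr ⟨by omega, mem_range.mpr (by omega)⟩
  have hstay : ∀ x ∈ ((range n).erase (n - 1)).erase (k - 1),
      f (rpUpdZero (defectArc s k) (s + x)) = f (defectArc s k) := by
    intro x hx
    simp only [mem_erase, mem_range] at hx
    rw [rpUpdZero_defectArc_of_ne s (by omega) (by omega)]
  rw [sum_zmod_eq_sum_range s, ← add_sum_erase _ _ hleft, ← add_sum_erase _ _ hright,
    rpUpdZero_defectArc_left s hk hkn, rpUpdZero_defectArc_right s hk hkn, sum_congr rfl hstay,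
    sum_const, card_erase_of_mem hright, card_erase_of_mem hleft, card_range, nsmul_eq_mul,
    Nat.cast_sub (by omega), Nat.cast_sub (by omega)]
  push_cast
  ring

theorem rpFirstHitAllDefectProb_defectArc (s : ZMod n) {k : ℕ} (hk : 1 ≤ k) (hkn : k ≤ n)
    (t : ℕ) : rpFirstHitAllDefectProb 0 (defectArc s k) t = negBinom (2 / n) (n - k) t := by
  induction t generalizing s k with
  | zero =>
    rw [rpFirstHitAllDefectProb_zero]
    rcases hkn.eq_or_lt with rfl | hlt
    · simp [defectArc_of_le s le_rfl, negBinom]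
    · obtain ⟨m, hm⟩ : ∃ m, n - k = m + 1 := ⟨n - k - 1, by omega⟩
      rw [if_neg (defectArc_ne_allDefect s hlt), hm, negBinom]
  | succ t ih =>
    rcases hkn.eq_or_lt with rfl | hlt
    · simp [defectArc_of_le s le_rfl, rpFirstHitAllDefectProb_allDefect_succ, negBinom]
    · obtain ⟨m, hm⟩ : ∃ m, n - k = m + 1 := ⟨n - k - 1, by omega⟩
      have hn : (n : ℝ) ≠ 0 := Nat.cast_ne_zero.mpr (NeZero.ne n)
      rw [rpFirstHitAllDefectProb_succ 0 (defectArc_ne_allDefect s hlt), sum_rpStepProb_zero_mul,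
        sum_rpUpdZero_defectArc s hk hlt (rpFirstHitAllDefectProb 0 · t),
        ih s (by omega) hlt, ih (s - 1) (by omega) hlt, ih s hk hkn, hm,
        show n - (k + 1) = m by omega, negBinom]
      field_simp
      ring

end Arcs

/-- For `p = 0`, started from a configuration with exactly one defector, the first hitting
time `T` of the all-defect configuration is distributed as the sum of `n-1` independent
geometric(`2/n`) random variables; in particular `E[T] = n(n-1)/2`. -/
theorem rp_defection_time_distribution (n : ℕ) [NeZero n] (hn : 3 ≤ n)
    (S0 : Config n) (hS0 : ∃! i : ZMod n, S0 i = false) :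
    (∀ t : ℕ, rpFirstHitAllDefectProb 0 S0 t = geomSumProb n t) ∧
      ∑' t : ℕ, (t : ℝ) * rpFirstHitAllDefectProb 0 S0 t = (n : ℝ) * ((n : ℝ) - 1) / 2 := by
  obtain ⟨v, rfl⟩ := eq_defectArc_one_of_existsUnique hS0
  have hlaw (t : ℕ) :
      rpFirstHitAllDefectProb 0 (defectArc v 1) t = negBinom (2 / n) (n - 1) t :=
    rpFirstHitAllDefectProb_defectArc v le_rfl NeZero.one_le t
  refine ⟨fun t => by rw [hlaw, geomSumProb_eq_negBinom], ?_⟩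
  have hq : |1 - 2 / (n : ℝ)| < 1 := by
    have hq1 : 2 / (n : ℝ) < 1 := (div_lt_one (by positivity)).mpr (by exact_mod_cast hn)
    rw [abs_lt]
    constructor <;> linarith [show 0 < 2 / (n : ℝ) by positivity]
  simp_rw [hlaw, (negBinom.hasSum_mul hq (n - 1)).tsum_eq]
  rw [Nat.cast_sub NeZero.one_le]
  field_simp
  ring
end

section
/- For all p ∈ [0,1]: h(1) ≤ 0, h(2) ≤ 0 and h(3) ≤ 0. Moreover: h(4) ≤ 0 for every p ∈ [0, 0.897]; h(5) ≤ 0 for every p ∈ [0, 0.877]; h(6) ≤ 0 for every p ∈ [0, 0.871]; h(7) ≤ 0 for every p ∈ [0, 0.870]; and h(8) ≤ 0 for every p ∈ [0, 0.869]. -/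
open scoped Classical



/-- The weight sequence `ŵ` from the fast-convergence analysis of Rational Pavlov:
`ŵ_0 = 0`, `ŵ_1 = 1`, `ŵ_2 = 1`, and for `ℓ ≥ 2`,
`ŵ_{ℓ+1} = −p(2−p)·(∑_{i=0}^{ℓ−2} ŵ_i) − p(1−p)·ŵ_{ℓ−1}
           − (1/2)·(ℓ(p²−2p) − (p²−2p+2))·ŵ_ℓ`. -/
noncomputable def wHat (p : ℝ) : ℕ → ℝ
  | 0 => 0
  | 1 => 1
  | 2 => 1
  | (m + 3) =>
      -p * (2 - p) * ((Finset.range (m + 1)).attach.sum fun i => wHat p i.1)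
        - p * (1 - p) * wHat p (m + 1)
        - (1 / 2) * (((m : ℝ) + 2) * (p ^ 2 - 2 * p) - (p ^ 2 - 2 * p + 2)) * wHat p (m + 2)
  termination_by ℓ => ℓ
  decreasing_by
  · have := Finset.mem_range.mp i.2; omega
  · omega
  · omega

/-- `g(ℓ) = ŵ_ℓ / ℓ`. -/
noncomputable def gSeq (p : ℝ) (ℓ : ℕ) : ℝ := wHat p ℓ / ℓ

/-- `h(ℓ) = g(ℓ+1) − g(ℓ)`. -/
noncomputable def hSeq (p : ℝ) (ℓ : ℕ) : ℝ := gSeq p (ℓ + 1) - gSeq p ℓ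

/-- `f(ℓ) = ŵ_{ℓ+1} − ŵ_ℓ`. -/
noncomputable def fSeq (p : ℝ) (ℓ : ℕ) : ℝ := wHat p (ℓ + 1) - wHat p ℓ



lemma wv0 (p : ℝ) : wHat p 0 = 0 := by rw [wHat]

lemma wv1 (p : ℝ) : wHat p 1 = 1 := by rw [wHat]

lemma wv2 (p : ℝ) : wHat p 2 = 1 := by rw [wHat]

lemma wv3 (p : ℝ) : wHat p 3 = (1) + (1/2)*p^2 := by
  show wHat p (0+3) = _
  rw [wHat, Finset.sum_attach]
  simp only [Finset.sum_range_succ, Finset.sum_range_zero, Nat.reduceAdd, wv0, wv1, wv2]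
  push_cast
  ring

lemma wv4 (p : ℝ) : wHat p 4 = (1) + (-1)*p + (3/2)*p^2 + (1)*p^3 + (-1/2)*p^4 := by
  show wHat p (1+3) = _
  rw [wHat, Finset.sum_attach]
  simp only [Finset.sum_range_succ, Finset.sum_range_zero, Nat.reduceAdd, wv0, wv1, wv2, wv3]
  push_cast
  ring

lemma wv5 (p : ℝ) : wHat p 5 = (1) + (-3)*p + (13/2)*p^3 + (3/4)*p^4 + (-3)*p^5 + (3/4)*p^6 := by
  show wHat p (2+3) = _
  rw [wHat, Finset.sum_attach]
  simp only [Finset.sum_range_succ, Finset.sum_range_zero, Nat.reduceAdd, wv0, wv1, wv2, wv3, wv4]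
  push_cast
  ring

lemma wv6 (p : ℝ) : wHat p 6 = (1) + (-6)*p + (-9)*p^2 + (9)*p^3 + (111/4)*p^4 + (-23/2)*p^5 + (-53/4)*p^6 + (9)*p^7 + (-3/2)*p^8 := by
  show wHat p (3+3) = _
  rw [wHat, Finset.sum_attach]
  simp only [Finset.sum_range_succ, Finset.sum_range_zero, Nat.reduceAdd, wv0, wv1, wv2, wv3, wv4, wv5]
  push_cast
  ring

lemma wv7 (p : ℝ) : wHat p 7 = (1) + (-10)*p + (-63/2)*p^2 + (-29)*p^3 + (355/4)*p^4 + (225/2)*p^5 + (-1095/8)*p^6 + (-129/4)*p^7 + (619/8)*p^8 + (-30)*p^9 + (15/4)*p^10 := by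
  show wHat p (4+3) = _
  rw [wHat, Finset.sum_attach]
  simp only [Finset.sum_range_succ, Finset.sum_range_zero, Nat.reduceAdd, wv0, wv1, wv2, wv3, wv4, wv5, wv6]
  push_cast
  ring

lemma wv8 (p : ℝ) : wHat p 8 = (1) + (-15)*p + (-149/2)*p^2 + (-193)*p^3 + (-87/4)*p^4 + (2881/4)*p^5 + (2539/8)*p^6 + (-4775/4)*p^7 + (273)*p^8 + (1083/2)*p^9 + (-3279/8)*p^10 + (225/2)*p^11 + (-45/4)*p^12 := by
  show wHat p (5+3) = _
  rw [wHat, Finset.sum_attach]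
  simp only [Finset.sum_range_succ, Finset.sum_range_zero, Nat.reduceAdd, wv0, wv1, wv2, wv3, wv4, wv5, wv6, wv7]
  push_cast
  ring

lemma wv9 (p : ℝ) : wHat p 9 = (1) + (-21)*p + (-146)*p^2 + (-1273/2)*p^3 + (-2309/2)*p^4 + (4345/4)*p^5 + (10937/2)*p^6 + (-9865/8)*p^7 + (-149267/16)*p^8 + (6533)*p^9 + (2531)*p^10 + (-37485/8)*p^11 + (35433/16)*p^12 + (-945/2)*p^13 + (315/8)*p^14 := by
  show wHat p (6+3) = _
  rw [wHat, Finset.sum_attach]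
  simp only [Finset.sum_range_succ, Finset.sum_range_zero, Nat.reduceAdd, wv0, wv1, wv2, wv3, wv4, wv5, wv6, wv7, wv8]
  push_cast
  ring

set_option maxHeartbeats 2000000 in
lemma hv1 (p : ℝ) (hp : p ∈ Set.Icc (0:ℝ) 1) : hSeq p 1 ≤ 0 := by
  have e : hSeq p 1 = ((1)) / 2 - ((1)) / 1 := by
    unfold hSeq gSeq
    rw [wv2, wv1]
    norm_num
  have t0 : (0:ℝ) ≤ p^0 * (1 - p)^0 := mul_nonneg (pow_nonneg hp.1 0) (pow_nonneg (by linarith [hp.2] : (0:ℝ) ≤ 1 - p) 0)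
  rw [e]
  linarith [t0]

set_option maxHeartbeats 2000000 in
lemma hv2 (p : ℝ) (hp : p ∈ Set.Icc (0:ℝ) 1) : hSeq p 2 ≤ 0 := by
  have e : hSeq p 2 = ((1) + (1/2)*p^2) / 3 - ((1)) / 2 := by
    unfold hSeq gSeq
    rw [wv3, wv2]
    norm_num
  have t0 : (0:ℝ) ≤ p^0 * (1 - p)^2 := mul_nonneg (pow_nonneg hp.1 0) (pow_nonneg (by linarith [hp.2] : (0:ℝ) ≤ 1 - p) 2)
  have t1 : (0:ℝ) ≤ p^1 * (1 - p)^1 := mul_nonneg (pow_nonneg hp.1 1) (pow_nonneg (by linarith [hp.2] : (0:ℝ) ≤ 1 - p) 1)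
  rw [e]
  linarith [t0, t1]

set_option maxHeartbeats 2000000 in
lemma hv3 (p : ℝ) (hp : p ∈ Set.Icc (0:ℝ) 1) : hSeq p 3 ≤ 0 := by
  have e : hSeq p 3 = ((1) + (-1)*p + (3/2)*p^2 + (1)*p^3 + (-1/2)*p^4) / 4 - ((1) + (1/2)*p^2) / 3 := by
    unfold hSeq gSeq
    rw [wv4, wv3]
    norm_num
  have t0 : (0:ℝ) ≤ p^0 * (1 - p)^4 := mul_nonneg (pow_nonneg hp.1 0) (pow_nonneg (by linarith [hp.2] : (0:ℝ) ≤ 1 - p) 4)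
  have t1 : (0:ℝ) ≤ p^1 * (1 - p)^3 := mul_nonneg (pow_nonneg hp.1 1) (pow_nonneg (by linarith [hp.2] : (0:ℝ) ≤ 1 - p) 3)
  have t2 : (0:ℝ) ≤ p^2 * (1 - p)^2 := mul_nonneg (pow_nonneg hp.1 2) (pow_nonneg (by linarith [hp.2] : (0:ℝ) ≤ 1 - p) 2)
  have t3 : (0:ℝ) ≤ p^3 * (1 - p)^1 := mul_nonneg (pow_nonneg hp.1 3) (pow_nonneg (by linarith [hp.2] : (0:ℝ) ≤ 1 - p) 1)
  rw [e]
  linarith [t0, t1, t2, t3]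

set_option maxHeartbeats 2000000 in
lemma hv4 (p : ℝ) (hp : p ∈ Set.Icc (0:ℝ) 0.897) : hSeq p 4 ≤ 0 := by
  have e : hSeq p 4 = ((1) + (-3)*p + (13/2)*p^3 + (3/4)*p^4 + (-3)*p^5 + (3/4)*p^6) / 5 - ((1) + (-1)*p + (3/2)*p^2 + (1)*p^3 + (-1/2)*p^4) / 4 := by
    unfold hSeq gSeq
    rw [wv5, wv4]
    norm_num
  have t0 : (0:ℝ) ≤ p^0 * (0.897 - p)^6 := mul_nonneg (pow_nonneg hp.1 0) (pow_nonneg (by linarith [hp.2] : (0:ℝ) ≤ 0.897 - p) 6)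
  have t1 : (0:ℝ) ≤ p^1 * (0.897 - p)^5 := mul_nonneg (pow_nonneg hp.1 1) (pow_nonneg (by linarith [hp.2] : (0:ℝ) ≤ 0.897 - p) 5)
  have t2 : (0:ℝ) ≤ p^2 * (0.897 - p)^4 := mul_nonneg (pow_nonneg hp.1 2) (pow_nonneg (by linarith [hp.2] : (0:ℝ) ≤ 0.897 - p) 4)
  have t3 : (0:ℝ) ≤ p^3 * (0.897 - p)^3 := mul_nonneg (pow_nonneg hp.1 3) (pow_nonneg (by linarith [hp.2] : (0:ℝ) ≤ 0.897 - p) 3)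
  have t4 : (0:ℝ) ≤ p^4 * (0.897 - p)^2 := mul_nonneg (pow_nonneg hp.1 4) (pow_nonneg (by linarith [hp.2] : (0:ℝ) ≤ 0.897 - p) 2)
  have t5 : (0:ℝ) ≤ p^5 * (0.897 - p)^1 := mul_nonneg (pow_nonneg hp.1 5) (pow_nonneg (by linarith [hp.2] : (0:ℝ) ≤ 0.897 - p) 1)
  have t6 : (0:ℝ) ≤ p^6 * (0.897 - p)^0 := mul_nonneg (pow_nonneg hp.1 6) (pow_nonneg (by linarith [hp.2] : (0:ℝ) ≤ 0.897 - p) 0)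
  rw [e]
  linarith [t0, t1, t2, t3, t4, t5, t6]

set_option maxHeartbeats 2000000 in
lemma hv5 (p : ℝ) (hp : p ∈ Set.Icc (0:ℝ) 0.877) : hSeq p 5 ≤ 0 := by
  have e : hSeq p 5 = ((1) + (-6)*p + (-9)*p^2 + (9)*p^3 + (111/4)*p^4 + (-23/2)*p^5 + (-53/4)*p^6 + (9)*p^7 + (-3/2)*p^8) / 6 - ((1) + (-3)*p + (13/2)*p^3 + (3/4)*p^4 + (-3)*p^5 + (3/4)*p^6) / 5 := by
    unfold hSeq gSeq
    rw [wv6, wv5]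
    norm_num
  have t0 : (0:ℝ) ≤ p^0 * (0.877 - p)^8 := mul_nonneg (pow_nonneg hp.1 0) (pow_nonneg (by linarith [hp.2] : (0:ℝ) ≤ 0.877 - p) 8)
  have t1 : (0:ℝ) ≤ p^1 * (0.877 - p)^7 := mul_nonneg (pow_nonneg hp.1 1) (pow_nonneg (by linarith [hp.2] : (0:ℝ) ≤ 0.877 - p) 7)
  have t2 : (0:ℝ) ≤ p^2 * (0.877 - p)^6 := mul_nonneg (pow_nonneg hp.1 2) (pow_nonneg (by linarith [hp.2] : (0:ℝ) ≤ 0.877 - p) 6)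
  have t3 : (0:ℝ) ≤ p^3 * (0.877 - p)^5 := mul_nonneg (pow_nonneg hp.1 3) (pow_nonneg (by linarith [hp.2] : (0:ℝ) ≤ 0.877 - p) 5)
  have t4 : (0:ℝ) ≤ p^4 * (0.877 - p)^4 := mul_nonneg (pow_nonneg hp.1 4) (pow_nonneg (by linarith [hp.2] : (0:ℝ) ≤ 0.877 - p) 4)
  have t5 : (0:ℝ) ≤ p^5 * (0.877 - p)^3 := mul_nonneg (pow_nonneg hp.1 5) (pow_nonneg (by linarith [hp.2] : (0:ℝ) ≤ 0.877 - p) 3)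
  have t6 : (0:ℝ) ≤ p^6 * (0.877 - p)^2 := mul_nonneg (pow_nonneg hp.1 6) (pow_nonneg (by linarith [hp.2] : (0:ℝ) ≤ 0.877 - p) 2)
  have t7 : (0:ℝ) ≤ p^7 * (0.877 - p)^1 := mul_nonneg (pow_nonneg hp.1 7) (pow_nonneg (by linarith [hp.2] : (0:ℝ) ≤ 0.877 - p) 1)
  have t8 : (0:ℝ) ≤ p^8 * (0.877 - p)^0 := mul_nonneg (pow_nonneg hp.1 8) (pow_nonneg (by linarith [hp.2] : (0:ℝ) ≤ 0.877 - p) 0)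
  rw [e]
  linarith [t0, t1, t2, t3, t4, t5, t6, t7, t8]

set_option maxHeartbeats 2000000 in
lemma hv6 (p : ℝ) (hp : p ∈ Set.Icc (0:ℝ) 0.871) : hSeq p 6 ≤ 0 := by
  have e : hSeq p 6 = ((1) + (-10)*p + (-63/2)*p^2 + (-29)*p^3 + (355/4)*p^4 + (225/2)*p^5 + (-1095/8)*p^6 + (-129/4)*p^7 + (619/8)*p^8 + (-30)*p^9 + (15/4)*p^10) / 7 - ((1) + (-6)*p + (-9)*p^2 + (9)*p^3 + (111/4)*p^4 + (-23/2)*p^5 + (-53/4)*p^6 + (9)*p^7 + (-3/2)*p^8) / 6 := by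
    unfold hSeq gSeq
    rw [wv7, wv6]
    norm_num
  have t0 : (0:ℝ) ≤ p^0 * (0.871 - p)^10 := mul_nonneg (pow_nonneg hp.1 0) (pow_nonneg (by linarith [hp.2] : (0:ℝ) ≤ 0.871 - p) 10)
  have t1 : (0:ℝ) ≤ p^1 * (0.871 - p)^9 := mul_nonneg (pow_nonneg hp.1 1) (pow_nonneg (by linarith [hp.2] : (0:ℝ) ≤ 0.871 - p) 9)
  have t2 : (0:ℝ) ≤ p^2 * (0.871 - p)^8 := mul_nonneg (pow_nonneg hp.1 2) (pow_nonneg (by linarith [hp.2] : (0:ℝ) ≤ 0.871 - p) 8)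
  have t3 : (0:ℝ) ≤ p^3 * (0.871 - p)^7 := mul_nonneg (pow_nonneg hp.1 3) (pow_nonneg (by linarith [hp.2] : (0:ℝ) ≤ 0.871 - p) 7)
  have t4 : (0:ℝ) ≤ p^4 * (0.871 - p)^6 := mul_nonneg (pow_nonneg hp.1 4) (pow_nonneg (by linarith [hp.2] : (0:ℝ) ≤ 0.871 - p) 6)
  have t5 : (0:ℝ) ≤ p^5 * (0.871 - p)^5 := mul_nonneg (pow_nonneg hp.1 5) (pow_nonneg (by linarith [hp.2] : (0:ℝ) ≤ 0.871 - p) 5)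
  have t6 : (0:ℝ) ≤ p^6 * (0.871 - p)^4 := mul_nonneg (pow_nonneg hp.1 6) (pow_nonneg (by linarith [hp.2] : (0:ℝ) ≤ 0.871 - p) 4)
  have t7 : (0:ℝ) ≤ p^7 * (0.871 - p)^3 := mul_nonneg (pow_nonneg hp.1 7) (pow_nonneg (by linarith [hp.2] : (0:ℝ) ≤ 0.871 - p) 3)
  have t8 : (0:ℝ) ≤ p^8 * (0.871 - p)^2 := mul_nonneg (pow_nonneg hp.1 8) (pow_nonneg (by linarith [hp.2] : (0:ℝ) ≤ 0.871 - p) 2)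
  have t9 : (0:ℝ) ≤ p^9 * (0.871 - p)^1 := mul_nonneg (pow_nonneg hp.1 9) (pow_nonneg (by linarith [hp.2] : (0:ℝ) ≤ 0.871 - p) 1)
  have t10 : (0:ℝ) ≤ p^10 * (0.871 - p)^0 := mul_nonneg (pow_nonneg hp.1 10) (pow_nonneg (by linarith [hp.2] : (0:ℝ) ≤ 0.871 - p) 0)
  rw [e]
  linarith [t0, t1, t2, t3, t4, t5, t6, t7, t8, t9, t10]

set_option maxHeartbeats 2000000 in
lemma hv7 (p : ℝ) (hp : p ∈ Set.Icc (0:ℝ) 0.870) : hSeq p 7 ≤ 0 := by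
  have e : hSeq p 7 = ((1) + (-15)*p + (-149/2)*p^2 + (-193)*p^3 + (-87/4)*p^4 + (2881/4)*p^5 + (2539/8)*p^6 + (-4775/4)*p^7 + (273)*p^8 + (1083/2)*p^9 + (-3279/8)*p^10 + (225/2)*p^11 + (-45/4)*p^12) / 8 - ((1) + (-10)*p + (-63/2)*p^2 + (-29)*p^3 + (355/4)*p^4 + (225/2)*p^5 + (-1095/8)*p^6 + (-129/4)*p^7 + (619/8)*p^8 + (-30)*p^9 + (15/4)*p^10) / 7 := by
    unfold hSeq gSeq
    rw [wv8, wv7]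
    norm_num
  have t0 : (0:ℝ) ≤ p^0 * (0.870 - p)^12 := mul_nonneg (pow_nonneg hp.1 0) (pow_nonneg (by linarith [hp.2] : (0:ℝ) ≤ 0.870 - p) 12)
  have t1 : (0:ℝ) ≤ p^1 * (0.870 - p)^11 := mul_nonneg (pow_nonneg hp.1 1) (pow_nonneg (by linarith [hp.2] : (0:ℝ) ≤ 0.870 - p) 11)
  have t2 : (0:ℝ) ≤ p^2 * (0.870 - p)^10 := mul_nonneg (pow_nonneg hp.1 2) (pow_nonneg (by linarith [hp.2] : (0:ℝ) ≤ 0.870 - p) 10)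
  have t3 : (0:ℝ) ≤ p^3 * (0.870 - p)^9 := mul_nonneg (pow_nonneg hp.1 3) (pow_nonneg (by linarith [hp.2] : (0:ℝ) ≤ 0.870 - p) 9)
  have t4 : (0:ℝ) ≤ p^4 * (0.870 - p)^8 := mul_nonneg (pow_nonneg hp.1 4) (pow_nonneg (by linarith [hp.2] : (0:ℝ) ≤ 0.870 - p) 8)
  have t5 : (0:ℝ) ≤ p^5 * (0.870 - p)^7 := mul_nonneg (pow_nonneg hp.1 5) (pow_nonneg (by linarith [hp.2] : (0:ℝ) ≤ 0.870 - p) 7)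
  have t6 : (0:ℝ) ≤ p^6 * (0.870 - p)^6 := mul_nonneg (pow_nonneg hp.1 6) (pow_nonneg (by linarith [hp.2] : (0:ℝ) ≤ 0.870 - p) 6)
  have t7 : (0:ℝ) ≤ p^7 * (0.870 - p)^5 := mul_nonneg (pow_nonneg hp.1 7) (pow_nonneg (by linarith [hp.2] : (0:ℝ) ≤ 0.870 - p) 5)
  have t8 : (0:ℝ) ≤ p^8 * (0.870 - p)^4 := mul_nonneg (pow_nonneg hp.1 8) (pow_nonneg (by linarith [hp.2] : (0:ℝ) ≤ 0.870 - p) 4)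
  have t9 : (0:ℝ) ≤ p^9 * (0.870 - p)^3 := mul_nonneg (pow_nonneg hp.1 9) (pow_nonneg (by linarith [hp.2] : (0:ℝ) ≤ 0.870 - p) 3)
  have t10 : (0:ℝ) ≤ p^10 * (0.870 - p)^2 := mul_nonneg (pow_nonneg hp.1 10) (pow_nonneg (by linarith [hp.2] : (0:ℝ) ≤ 0.870 - p) 2)
  have t11 : (0:ℝ) ≤ p^11 * (0.870 - p)^1 := mul_nonneg (pow_nonneg hp.1 11) (pow_nonneg (by linarith [hp.2] : (0:ℝ) ≤ 0.870 - p) 1)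
  have t12 : (0:ℝ) ≤ p^12 * (0.870 - p)^0 := mul_nonneg (pow_nonneg hp.1 12) (pow_nonneg (by linarith [hp.2] : (0:ℝ) ≤ 0.870 - p) 0)
  rw [e]
  linarith [t0, t1, t2, t3, t4, t5, t6, t7, t8, t9, t10, t11, t12]

set_option maxHeartbeats 2000000 in
lemma hv8 (p : ℝ) (hp : p ∈ Set.Icc (0:ℝ) 0.869) : hSeq p 8 ≤ 0 := by
  have e : hSeq p 8 = ((1) + (-21)*p + (-146)*p^2 + (-1273/2)*p^3 + (-2309/2)*p^4 + (4345/4)*p^5 + (10937/2)*p^6 + (-9865/8)*p^7 + (-149267/16)*p^8 + (6533)*p^9 + (2531)*p^10 + (-37485/8)*p^11 + (35433/16)*p^12 + (-945/2)*p^13 + (315/8)*p^14) / 9 - ((1) + (-15)*p + (-149/2)*p^2 + (-193)*p^3 + (-87/4)*p^4 + (2881/4)*p^5 + (2539/8)*p^6 + (-4775/4)*p^7 + (273)*p^8 + (1083/2)*p^9 + (-3279/8)*p^10 + (225/2)*p^11 + (-45/4)*p^12) / 8 := by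
    unfold hSeq gSeq
    rw [wv9, wv8]
    norm_num
  have t0 : (0:ℝ) ≤ p^0 * (0.869 - p)^14 := mul_nonneg (pow_nonneg hp.1 0) (pow_nonneg (by linarith [hp.2] : (0:ℝ) ≤ 0.869 - p) 14)
  have t1 : (0:ℝ) ≤ p^1 * (0.869 - p)^13 := mul_nonneg (pow_nonneg hp.1 1) (pow_nonneg (by linarith [hp.2] : (0:ℝ) ≤ 0.869 - p) 13)
  have t2 : (0:ℝ) ≤ p^2 * (0.869 - p)^12 := mul_nonneg (pow_nonneg hp.1 2) (pow_nonneg (by linarith [hp.2] : (0:ℝ) ≤ 0.869 - p) 12)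
  have t3 : (0:ℝ) ≤ p^3 * (0.869 - p)^11 := mul_nonneg (pow_nonneg hp.1 3) (pow_nonneg (by linarith [hp.2] : (0:ℝ) ≤ 0.869 - p) 11)
  have t4 : (0:ℝ) ≤ p^4 * (0.869 - p)^10 := mul_nonneg (pow_nonneg hp.1 4) (pow_nonneg (by linarith [hp.2] : (0:ℝ) ≤ 0.869 - p) 10)
  have t5 : (0:ℝ) ≤ p^5 * (0.869 - p)^9 := mul_nonneg (pow_nonneg hp.1 5) (pow_nonneg (by linarith [hp.2] : (0:ℝ) ≤ 0.869 - p) 9)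
  have t6 : (0:ℝ) ≤ p^6 * (0.869 - p)^8 := mul_nonneg (pow_nonneg hp.1 6) (pow_nonneg (by linarith [hp.2] : (0:ℝ) ≤ 0.869 - p) 8)
  have t7 : (0:ℝ) ≤ p^7 * (0.869 - p)^7 := mul_nonneg (pow_nonneg hp.1 7) (pow_nonneg (by linarith [hp.2] : (0:ℝ) ≤ 0.869 - p) 7)
  have t8 : (0:ℝ) ≤ p^8 * (0.869 - p)^6 := mul_nonneg (pow_nonneg hp.1 8) (pow_nonneg (by linarith [hp.2] : (0:ℝ) ≤ 0.869 - p) 6)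
  have t9 : (0:ℝ) ≤ p^9 * (0.869 - p)^5 := mul_nonneg (pow_nonneg hp.1 9) (pow_nonneg (by linarith [hp.2] : (0:ℝ) ≤ 0.869 - p) 5)
  have t10 : (0:ℝ) ≤ p^10 * (0.869 - p)^4 := mul_nonneg (pow_nonneg hp.1 10) (pow_nonneg (by linarith [hp.2] : (0:ℝ) ≤ 0.869 - p) 4)
  have t11 : (0:ℝ) ≤ p^11 * (0.869 - p)^3 := mul_nonneg (pow_nonneg hp.1 11) (pow_nonneg (by linarith [hp.2] : (0:ℝ) ≤ 0.869 - p) 3)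
  have t12 : (0:ℝ) ≤ p^12 * (0.869 - p)^2 := mul_nonneg (pow_nonneg hp.1 12) (pow_nonneg (by linarith [hp.2] : (0:ℝ) ≤ 0.869 - p) 2)
  have t13 : (0:ℝ) ≤ p^13 * (0.869 - p)^1 := mul_nonneg (pow_nonneg hp.1 13) (pow_nonneg (by linarith [hp.2] : (0:ℝ) ≤ 0.869 - p) 1)
  have t14 : (0:ℝ) ≤ p^14 * (0.869 - p)^0 := mul_nonneg (pow_nonneg hp.1 14) (pow_nonneg (by linarith [hp.2] : (0:ℝ) ≤ 0.869 - p) 0)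
  rw [e]
  linarith [t0, t1, t2, t3, t4, t5, t6, t7, t8, t9, t10, t11, t12, t13, t14]

set_option maxHeartbeats 2000000 in
/-- Sign ranges of `h(1), …, h(8)`: `h(1), h(2), h(3) ≤ 0` on all of `[0,1]`, and
`h(4) ≤ 0` on `[0, 0.897]`, `h(5) ≤ 0` on `[0, 0.877]`, `h(6) ≤ 0` on `[0, 0.871]`,
`h(7) ≤ 0` on `[0, 0.870]`, `h(8) ≤ 0` on `[0, 0.869]`. -/
theorem hSeq_nonpos_ranges :
    (∀ p : ℝ, p ∈ Set.Icc (0 : ℝ) 1 → hSeq p 1 ≤ 0 ∧ hSeq p 2 ≤ 0 ∧ hSeq p 3 ≤ 0) ∧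
      (∀ p : ℝ, p ∈ Set.Icc (0 : ℝ) 0.897 → hSeq p 4 ≤ 0) ∧
      (∀ p : ℝ, p ∈ Set.Icc (0 : ℝ) 0.877 → hSeq p 5 ≤ 0) ∧
      (∀ p : ℝ, p ∈ Set.Icc (0 : ℝ) 0.871 → hSeq p 6 ≤ 0) ∧
      (∀ p : ℝ, p ∈ Set.Icc (0 : ℝ) 0.870 → hSeq p 7 ≤ 0) ∧
      (∀ p : ℝ, p ∈ Set.Icc (0 : ℝ) 0.869 → hSeq p 8 ≤ 0) :=
  ⟨fun p hp => ⟨hv1 p hp, hv2 p hp, hv3 p hp⟩, fun p hp => hv4 p hp, fun p hp => hv5 p hp,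
   fun p hp => hv6 p hp, fun p hp => hv7 p hp, fun p hp => hv8 p hp⟩
end

section
/- For every p ∈ [0,1] the following closed forms hold: f(0) = 1; f(1) = 0; f(2) = (1/2)p²; f(3) = −p + p² + p³ − (1/2)p⁴; f(4) = −2p − (3/2)p² + (11/2)p³ + (5/4)p⁴ − 3p⁵ + (3/4)p⁶. Moreover f(3) ≥ 0 for every p ∈ [0.689, 1], and f(4) ≥ 0 for every p ∈ [0.805, 1]. -/
open scoped Classical

lemma w3 (p : ℝ) : wHat p 3 = 1 + (1/2) * p ^ 2 := by
  show wHat p (0 + 3) = _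
  rw [wHat]
  simp [Finset.sum_attach, wHat]
  ring

lemma w4 (p : ℝ) : wHat p 4 = 1 - p + (3/2) * p ^ 2 + p ^ 3 - (1/2) * p ^ 4 := by
  show wHat p (1 + 3) = _
  rw [wHat]
  rw [Finset.sum_attach (Finset.range 2) (fun i => wHat p i)]
  simp [Finset.sum_range_succ, wHat, w3]
  ring

lemma w5 (p : ℝ) : wHat p 5 = 1 - 3*p + (13/2) * p ^ 3 + (3/4) * p ^ 4 - 3 * p ^ 5 + (3/4) * p ^ 6 := by
  show wHat p (2 + 3) = _
  rw [wHat]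
  rw [Finset.sum_attach (Finset.range 3) (fun i => wHat p i)]
  simp [Finset.sum_range_succ, wHat, w3, w4]
  ring

lemma f3eq (p : ℝ) : fSeq p 3 = -p + p ^ 2 + p ^ 3 - (1 / 2) * p ^ 4 := by
  simp [fSeq, w3, w4]; ring

lemma f4eq (p : ℝ) : fSeq p 4 = -2 * p - (3 / 2) * p ^ 2 + (11 / 2) * p ^ 3 + (5 / 4) * p ^ 4
    - 3 * p ^ 5 + (3 / 4) * p ^ 6 := by
  simp [fSeq, w4, w5]; ring

/-- Closed forms for `f(0), …, f(4)` as polynomials in `p`, together with the sign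
ranges `f(3) ≥ 0` on `[0.689, 1]` and `f(4) ≥ 0` on `[0.805, 1]`. -/
theorem fSeq_closed_forms :
    (∀ p : ℝ, p ∈ Set.Icc (0 : ℝ) 1 →
        fSeq p 0 = 1 ∧
        fSeq p 1 = 0 ∧
        fSeq p 2 = (1 / 2) * p ^ 2 ∧
        fSeq p 3 = -p + p ^ 2 + p ^ 3 - (1 / 2) * p ^ 4 ∧
        fSeq p 4 = -2 * p - (3 / 2) * p ^ 2 + (11 / 2) * p ^ 3 + (5 / 4) * p ^ 4
          - 3 * p ^ 5 + (3 / 4) * p ^ 6) ∧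
      (∀ p : ℝ, p ∈ Set.Icc (0.689 : ℝ) 1 → 0 ≤ fSeq p 3) ∧
      (∀ p : ℝ, p ∈ Set.Icc (0.805 : ℝ) 1 → 0 ≤ fSeq p 4) := by
  refine ⟨fun p _ => ?_, fun p hp => ?_, fun p hp => ?_⟩
  · refine ⟨?_, ?_, ?_, f3eq p, f4eq p⟩
    · simp [fSeq, wHat]
    · simp [fSeq, wHat]
    · simp [fSeq, wHat, w3]
  · obtain ⟨h1, h2⟩ := hp
    rw [f3eq]
    nlinarith [mul_nonneg (sub_nonneg.2 h1) (sub_nonneg.2 h2), sq_nonneg (p - 0.689),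
      sq_nonneg (1 - p),
      mul_nonneg (mul_nonneg (sub_nonneg.2 h1) (sub_nonneg.2 h2)) (sub_nonneg.2 h2)]
  · obtain ⟨h1, h2⟩ := hp
    rw [f4eq]
    nlinarith [mul_nonneg (sub_nonneg.2 h1) (sub_nonneg.2 h2), sq_nonneg (p - 0.805),
      sq_nonneg (1 - p),
      mul_nonneg (mul_nonneg (sub_nonneg.2 h1) (sub_nonneg.2 h2)) (sub_nonneg.2 h2),
      mul_nonneg (mul_nonneg (sub_nonneg.2 h1) (sub_nonneg.2 h1)) (sub_nonneg.2 h2),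
      mul_nonneg (mul_nonneg (mul_nonneg (sub_nonneg.2 h1) (sub_nonneg.2 h2)) (sub_nonneg.2 h2)) (sub_nonneg.2 h2)]
end

section
/- Lemma (the weights are non-decreasing). For every p ∈ [0.869, 1] and every ℓ ∈ {0, 1, …, 7}, one has ŵ_{ℓ+1} ≥ ŵ_ℓ (equivalently f(ℓ) ≥ 0 for ℓ = 0, 1, …, 7); in particular f(5) ≥ 0 for p ∈ [0.850, 1], f(6) ≥ 0 for p ∈ [0.865, 1], and f(7) ≥ 0 for p ∈ [0.869, 1]. -/
open scoped Classical

/-!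
For `ℓ ≤ 8` the weight `ŵ_ℓ` is an explicit polynomial in `p`, obtained by unfolding the
recursion. Each difference `ŵ_{ℓ+1} - ŵ_ℓ` is then nonnegative on its interval `[a, 1]`:
written in `t = p - a`, it is a nonnegative combination of the facts `0 ≤ t ^ k` and
`t ^ (k + 1) ≤ (1 - a) * t ^ k`, a certificate that `linarith` finds.
-/

open Finset

lemma wHat_add_three (p : ℝ) (m : ℕ) :
    wHat p (m + 3) =
      -p * (2 - p) * ∑ i ∈ range (m + 1), wHat p i
        - p * (1 - p) * wHat p (m + 1)
        - (1 / 2) * (((m : ℝ) + 2) * (p ^ 2 - 2 * p) - (p ^ 2 - 2 * p + 2)) * wHat p (m + 2) := by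
  rw [wHat, sum_attach]

section ClosedForms

variable (p : ℝ)

lemma wHat_zero : wHat p 0 = 0 := by rw [wHat]

lemma wHat_one : wHat p 1 = 1 := by rw [wHat]

lemma wHat_two : wHat p 2 = 1 := by rw [wHat]

lemma wHat_three : wHat p 3 = 1 + p ^ 2 / 2 := by
  rw [wHat_add_three]
  norm_num [sum_range_succ, wHat_zero, wHat_one, wHat_two]
  ring

lemma wHat_four : wHat p 4 = 1 - p + 3 / 2 * p ^ 2 + p ^ 3 - 1 / 2 * p ^ 4 := by
  rw [wHat_add_three]
  norm_num [sum_range_succ, wHat_zero, wHat_one, wHat_two, wHat_three]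
  ring

lemma wHat_five :
    wHat p 5 = 1 - 3 * p + 13 / 2 * p ^ 3 + 3 / 4 * p ^ 4 - 3 * p ^ 5 + 3 / 4 * p ^ 6 := by
  rw [wHat_add_three]
  norm_num [sum_range_succ, wHat_zero, wHat_one, wHat_two, wHat_three, wHat_four]
  ring

lemma wHat_six :
    wHat p 6 = 1 - 6 * p - 9 * p ^ 2 + 9 * p ^ 3 + 111 / 4 * p ^ 4 - 23 / 2 * p ^ 5
      - 53 / 4 * p ^ 6 + 9 * p ^ 7 - 3 / 2 * p ^ 8 := by
  rw [wHat_add_three]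
  norm_num [sum_range_succ, wHat_zero, wHat_one, wHat_two, wHat_three, wHat_four, wHat_five]
  ring

lemma wHat_seven :
    wHat p 7 = 1 - 10 * p - 63 / 2 * p ^ 2 - 29 * p ^ 3 + 355 / 4 * p ^ 4 + 225 / 2 * p ^ 5
      - 1095 / 8 * p ^ 6 - 129 / 4 * p ^ 7 + 619 / 8 * p ^ 8 - 30 * p ^ 9 + 15 / 4 * p ^ 10 := by
  rw [wHat_add_three]
  norm_num [sum_range_succ, wHat_zero, wHat_one, wHat_two, wHat_three, wHat_four, wHat_five,
    wHat_six]
  ring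

lemma wHat_eight :
    wHat p 8 = 1 - 15 * p - 149 / 2 * p ^ 2 - 193 * p ^ 3 - 87 / 4 * p ^ 4 + 2881 / 4 * p ^ 5
      + 2539 / 8 * p ^ 6 - 4775 / 4 * p ^ 7 + 273 * p ^ 8 + 1083 / 2 * p ^ 9
      - 3279 / 8 * p ^ 10 + 225 / 2 * p ^ 11 - 45 / 4 * p ^ 12 := by
  rw [wHat_add_three]
  norm_num [sum_range_succ, wHat_zero, wHat_one, wHat_two, wHat_three, wHat_four, wHat_five,
    wHat_six, wHat_seven]
  ring

end ClosedForms

lemma pow_succ_le_mul_pow_of_le {t c : ℝ} (ht : 0 ≤ t) (htc : t ≤ c) (k : ℕ) :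
    t ^ (k + 1) ≤ c * t ^ k := by
  rw [pow_succ, mul_comm]
  exact mul_le_mul_of_nonneg_right htc (pow_nonneg ht k)

section Differences

variable {p : ℝ}

lemma wHat_two_le_three : wHat p 2 ≤ wHat p 3 := by
  rw [wHat_two, wHat_three]
  linarith [sq_nonneg p]

lemma wHat_three_le_four (ha : 0.7 ≤ p) (hb : p ≤ 1) : wHat p 3 ≤ wHat p 4 := by
  rw [wHat_three, wHat_four]
  have ht : 0 ≤ p - 0.7 := by linarith
  have hc := pow_succ_le_mul_pow_of_le ht (show p - 0.7 ≤ 0.3 by linarith)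
  linarith [hc 2, hc 3, pow_nonneg ht 2, pow_nonneg ht 3, pow_nonneg ht 4]

lemma wHat_four_le_five (ha : 0.81 ≤ p) (hb : p ≤ 1) : wHat p 4 ≤ wHat p 5 := by
  rw [wHat_four, wHat_five]
  have ht : 0 ≤ p - 0.81 := by linarith
  have hc := pow_succ_le_mul_pow_of_le ht (show p - 0.81 ≤ 0.19 by linarith)
  linarith [hc 2, hc 3, hc 4, hc 5, pow_nonneg ht 2, pow_nonneg ht 3, pow_nonneg ht 4,
    pow_nonneg ht 5, pow_nonneg ht 6]

lemma wHat_five_le_six (ha : 0.85 ≤ p) (hb : p ≤ 1) : wHat p 5 ≤ wHat p 6 := by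
  rw [wHat_five, wHat_six]
  have ht : 0 ≤ p - 0.85 := by linarith
  have hc := pow_succ_le_mul_pow_of_le ht (show p - 0.85 ≤ 0.15 by linarith)
  linarith [hc 2, hc 3, hc 4, hc 5, hc 6, hc 7, pow_nonneg ht 2, pow_nonneg ht 3,
    pow_nonneg ht 4, pow_nonneg ht 5, pow_nonneg ht 6, pow_nonneg ht 7, pow_nonneg ht 8]

lemma wHat_six_le_seven (ha : 0.865 ≤ p) (hb : p ≤ 1) : wHat p 6 ≤ wHat p 7 := by
  rw [wHat_six, wHat_seven]
  have ht : 0 ≤ p - 0.865 := by linarith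
  have hc := pow_succ_le_mul_pow_of_le ht (show p - 0.865 ≤ 0.135 by linarith)
  linarith [hc 2, hc 3, hc 4, hc 5, hc 6, hc 7, hc 8, hc 9, pow_nonneg ht 2, pow_nonneg ht 3,
    pow_nonneg ht 4, pow_nonneg ht 5, pow_nonneg ht 6, pow_nonneg ht 7, pow_nonneg ht 8,
    pow_nonneg ht 9, pow_nonneg ht 10]

lemma wHat_seven_le_eight (ha : 0.869 ≤ p) (hb : p ≤ 1) : wHat p 7 ≤ wHat p 8 := by
  rw [wHat_seven, wHat_eight]
  have ht : 0 ≤ p - 0.869 := by linarith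
  have hc := pow_succ_le_mul_pow_of_le ht (show p - 0.869 ≤ 0.131 by linarith)
  linarith [hc 2, hc 3, hc 4, hc 5, hc 6, hc 7, hc 8, hc 9, hc 10, hc 11, pow_nonneg ht 2,
    pow_nonneg ht 3, pow_nonneg ht 4, pow_nonneg ht 5, pow_nonneg ht 6, pow_nonneg ht 7,
    pow_nonneg ht 8, pow_nonneg ht 9, pow_nonneg ht 10, pow_nonneg ht 11, pow_nonneg ht 12]

end Differences

/-- **The weights are non-decreasing.** For every `p ∈ [0.869, 1]` and `ℓ ∈ {0, …, 7}`
one has `ŵ_{ℓ+1} ≥ ŵ_ℓ`, i.e. `f(ℓ) ≥ 0`; in particular `f(5) ≥ 0` on `[0.850, 1]`,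
`f(6) ≥ 0` on `[0.865, 1]` and `f(7) ≥ 0` on `[0.869, 1]`. -/
theorem wHat_nondecreasing :
    (∀ p : ℝ, p ∈ Set.Icc (0.869 : ℝ) 1 →
        ∀ ℓ : ℕ, ℓ ≤ 7 → wHat p ℓ ≤ wHat p (ℓ + 1)) ∧
      (∀ p : ℝ, p ∈ Set.Icc (0.850 : ℝ) 1 → 0 ≤ fSeq p 5) ∧
      (∀ p : ℝ, p ∈ Set.Icc (0.865 : ℝ) 1 → 0 ≤ fSeq p 6) ∧
      (∀ p : ℝ, p ∈ Set.Icc (0.869 : ℝ) 1 → 0 ≤ fSeq p 7) := by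
  refine ⟨?_, ?_, ?_, ?_⟩
  · rintro p ⟨ha, hb⟩ ℓ hℓ
    interval_cases ℓ
    · simp [wHat_zero, wHat_one]
    · rw [wHat_one, wHat_two]
    · exact wHat_two_le_three
    · exact wHat_three_le_four (by linarith) hb
    · exact wHat_four_le_five (by linarith) hb
    · exact wHat_five_le_six (by linarith) hb
    · exact wHat_six_le_seven (by linarith) hb
    · exact wHat_seven_le_eight ha hb
  · exact fun p hp ↦ sub_nonneg.2 (wHat_five_le_six (by linarith [hp.1]) hp.2)
  · exact fun p hp ↦ sub_nonneg.2 (wHat_six_le_seven hp.1 hp.2)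
  · exact fun p hp ↦ sub_nonneg.2 (wHat_seven_le_eight hp.1 hp.2)
end

section
/- For every p ∈ [0.870, 1]: α ≤ 1 and α·ℓ ≤ w_ℓ ≤ ℓ for every integer ℓ ≥ 1. Consequently, for every n ≥ 3 and every configuration S on the n-cycle, W(S) ≤ n; moreover w_1 = 1, so W(S) ≥ 1 whenever S is not the constant-true configuration. -/
open scoped Classical

/-- `ℓ0`: the least `ℓ ≥ 1` with `g(ℓ+1) ≥ g(ℓ)` (for `p ∈ [0.870, 1]` this set is
nonempty, so `sInf` is its least element). -/
noncomputable def ell0 (p : ℝ) : ℕ := sInf {ℓ : ℕ | 1 ≤ ℓ ∧ gSeq p ℓ ≤ gSeq p (ℓ + 1)}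

/-- `α = g(ℓ0)`, the minimum value of `g`. -/
noncomputable def alphaMin (p : ℝ) : ℝ := gSeq p (ell0 p)

/-- The weight sequence: `w_ℓ = ŵ_ℓ` for `ℓ ≤ ℓ0` and `w_ℓ = α·ℓ` for `ℓ > ℓ0`. -/
noncomputable def wSeq (p : ℝ) (ℓ : ℕ) : ℝ :=
  if ℓ ≤ ell0 p then wHat p ℓ else alphaMin p * ℓ

/-- The length of the defector-run starting at `i`: the least `m ≥ 1` with
`S (i + m) = true` (this counts the consecutive `false` vertices `i, i+1, …`). -/
noncomputable def runLen {n : ℕ} (S : Config n) (i : ZMod n) : ℕ :=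
  sInf {m : ℕ | 1 ≤ m ∧ S (i + (m : ZMod n)) = true}

/-- The potential `W(S)`: the sum of `w(ℓ(R))` over the defector-runs `R` of `S`
(each run is counted at its starting vertex, i.e. a defector whose predecessor is a
cooperator); the constant-false configuration counts as a single run of length `n`,
and the constant-true configuration has potential `0`. -/
noncomputable def potential {n : ℕ} [NeZero n] (w : ℕ → ℝ) (S : Config n) : ℝ :=
  if S = fun _ => false then w n
  else ∑ i : ZMod n, if S i = false ∧ S (i - 1) = true then w (runLen S i) else 0

lemma wHat3 (p : ℝ) : wHat p 3 = (1 : ℝ) + ((1 : ℝ)/2)*p^2 := by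
  show wHat p (0+3) = _
  rw [wHat]
  simp [Finset.sum_attach, Finset.sum_range_succ, wHat]
  try ring

lemma wHat4 (p : ℝ) : wHat p 4 = (1 : ℝ) + (-1 : ℝ)*p + ((3 : ℝ)/2)*p^2 + (1 : ℝ)*p^3 + ((-1 : ℝ)/2)*p^4 := by
  show wHat p (1+3) = _
  rw [wHat]
  simp [Finset.sum_attach, Finset.sum_range_succ, wHat, wHat3]
  try ring

lemma wHat5 (p : ℝ) : wHat p 5 = (1 : ℝ) + (-3 : ℝ)*p + ((13 : ℝ)/2)*p^3 + ((3 : ℝ)/4)*p^4 + (-3 : ℝ)*p^5 + ((3 : ℝ)/4)*p^6 := by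
  show wHat p (2+3) = _
  rw [wHat]
  simp [Finset.sum_attach, Finset.sum_range_succ, wHat, wHat3, wHat4]
  try ring

lemma wHat6 (p : ℝ) : wHat p 6 = (1 : ℝ) + (-6 : ℝ)*p + (-9 : ℝ)*p^2 + (9 : ℝ)*p^3 + ((111 : ℝ)/4)*p^4 + ((-23 : ℝ)/2)*p^5 + ((-53 : ℝ)/4)*p^6 + (9 : ℝ)*p^7 + ((-3 : ℝ)/2)*p^8 := by
  show wHat p (3+3) = _
  rw [wHat]
  simp [Finset.sum_attach, Finset.sum_range_succ, wHat, wHat3, wHat4, wHat5]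
  try ring

lemma wHat7 (p : ℝ) : wHat p 7 = (1 : ℝ) + (-10 : ℝ)*p + ((-63 : ℝ)/2)*p^2 + (-29 : ℝ)*p^3 + ((355 : ℝ)/4)*p^4 + ((225 : ℝ)/2)*p^5 + ((-1095 : ℝ)/8)*p^6 + ((-129 : ℝ)/4)*p^7 + ((619 : ℝ)/8)*p^8 + (-30 : ℝ)*p^9 + ((15 : ℝ)/4)*p^10 := by
  show wHat p (4+3) = _
  rw [wHat]
  simp [Finset.sum_attach, Finset.sum_range_succ, wHat, wHat3, wHat4, wHat5, wHat6]
  try ring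

lemma wHat8 (p : ℝ) : wHat p 8 = (1 : ℝ) + (-15 : ℝ)*p + ((-149 : ℝ)/2)*p^2 + (-193 : ℝ)*p^3 + ((-87 : ℝ)/4)*p^4 + ((2881 : ℝ)/4)*p^5 + ((2539 : ℝ)/8)*p^6 + ((-4775 : ℝ)/4)*p^7 + (273 : ℝ)*p^8 + ((1083 : ℝ)/2)*p^9 + ((-3279 : ℝ)/8)*p^10 + ((225 : ℝ)/2)*p^11 + ((-45 : ℝ)/4)*p^12 := by
  show wHat p (5+3) = _
  rw [wHat]
  simp [Finset.sum_attach, Finset.sum_range_succ, wHat, wHat3, wHat4, wHat5, wHat6, wHat7]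
  try ring

lemma wHat9 (p : ℝ) : wHat p 9 = (1 : ℝ) + (-21 : ℝ)*p + (-146 : ℝ)*p^2 + ((-1273 : ℝ)/2)*p^3 + ((-2309 : ℝ)/2)*p^4 + ((4345 : ℝ)/4)*p^5 + ((10937 : ℝ)/2)*p^6 + ((-9865 : ℝ)/8)*p^7 + ((-149267 : ℝ)/16)*p^8 + (6533 : ℝ)*p^9 + (2531 : ℝ)*p^10 + ((-37485 : ℝ)/8)*p^11 + ((35433 : ℝ)/16)*p^12 + ((-945 : ℝ)/2)*p^13 + ((315 : ℝ)/8)*p^14 := by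
  show wHat p (6+3) = _
  rw [wHat]
  simp [Finset.sum_attach, Finset.sum_range_succ, wHat, wHat3, wHat4, wHat5, wHat6, wHat7, wHat8]
  try ring
lemma keyA (p : ℝ) (hp1 : (87:ℝ)/100 ≤ p) (hp2 : p ≤ 1) : 9 * wHat p 8 ≤ 8 * wHat p 9 := by
  have h0 : (0:ℝ) ≤ p - 87/100 := by linarith
  have h1 : p - 87/100 ≤ 13/100 := by linarith
  have c1 : (p - 87/100)^2 ≤ 13/100 * (p - 87/100)^1 := by
    calc (p - 87/100)^2 = (p-87/100)^1 * (p-87/100) := by ring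
    _ ≤ (p-87/100)^1 * (13/100) := mul_le_mul_of_nonneg_left h1 (pow_nonneg h0 1)
    _ = 13/100 * (p - 87/100)^1 := by ring
  have c2 : (p - 87/100)^3 ≤ 13/100 * (p - 87/100)^2 := by
    calc (p - 87/100)^3 = (p-87/100)^2 * (p-87/100) := by ring
    _ ≤ (p-87/100)^2 * (13/100) := mul_le_mul_of_nonneg_left h1 (pow_nonneg h0 2)
    _ = 13/100 * (p - 87/100)^2 := by ring
  have c3 : (p - 87/100)^4 ≤ 13/100 * (p - 87/100)^3 := by
    calc (p - 87/100)^4 = (p-87/100)^3 * (p-87/100) := by ring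
    _ ≤ (p-87/100)^3 * (13/100) := mul_le_mul_of_nonneg_left h1 (pow_nonneg h0 3)
    _ = 13/100 * (p - 87/100)^3 := by ring
  have c4 : (p - 87/100)^5 ≤ 13/100 * (p - 87/100)^4 := by
    calc (p - 87/100)^5 = (p-87/100)^4 * (p-87/100) := by ring
    _ ≤ (p-87/100)^4 * (13/100) := mul_le_mul_of_nonneg_left h1 (pow_nonneg h0 4)
    _ = 13/100 * (p - 87/100)^4 := by ring
  have c5 : (p - 87/100)^6 ≤ 13/100 * (p - 87/100)^5 := by
    calc (p - 87/100)^6 = (p-87/100)^5 * (p-87/100) := by ring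
    _ ≤ (p-87/100)^5 * (13/100) := mul_le_mul_of_nonneg_left h1 (pow_nonneg h0 5)
    _ = 13/100 * (p - 87/100)^5 := by ring
  have c6 : (p - 87/100)^7 ≤ 13/100 * (p - 87/100)^6 := by
    calc (p - 87/100)^7 = (p-87/100)^6 * (p-87/100) := by ring
    _ ≤ (p-87/100)^6 * (13/100) := mul_le_mul_of_nonneg_left h1 (pow_nonneg h0 6)
    _ = 13/100 * (p - 87/100)^6 := by ring
  have c7 : (p - 87/100)^8 ≤ 13/100 * (p - 87/100)^7 := by
    calc (p - 87/100)^8 = (p-87/100)^7 * (p-87/100) := by ring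
    _ ≤ (p-87/100)^7 * (13/100) := mul_le_mul_of_nonneg_left h1 (pow_nonneg h0 7)
    _ = 13/100 * (p - 87/100)^7 := by ring
  have c8 : (p - 87/100)^9 ≤ 13/100 * (p - 87/100)^8 := by
    calc (p - 87/100)^9 = (p-87/100)^8 * (p-87/100) := by ring
    _ ≤ (p-87/100)^8 * (13/100) := mul_le_mul_of_nonneg_left h1 (pow_nonneg h0 8)
    _ = 13/100 * (p - 87/100)^8 := by ring
  have c9 : (p - 87/100)^10 ≤ 13/100 * (p - 87/100)^9 := by
    calc (p - 87/100)^10 = (p-87/100)^9 * (p-87/100) := by ring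
    _ ≤ (p-87/100)^9 * (13/100) := mul_le_mul_of_nonneg_left h1 (pow_nonneg h0 9)
    _ = 13/100 * (p - 87/100)^9 := by ring
  have c10 : (p - 87/100)^11 ≤ 13/100 * (p - 87/100)^10 := by
    calc (p - 87/100)^11 = (p-87/100)^10 * (p-87/100) := by ring
    _ ≤ (p-87/100)^10 * (13/100) := mul_le_mul_of_nonneg_left h1 (pow_nonneg h0 10)
    _ = 13/100 * (p - 87/100)^10 := by ring
  have c11 : (p - 87/100)^12 ≤ 13/100 * (p - 87/100)^11 := by
    calc (p - 87/100)^12 = (p-87/100)^11 * (p-87/100) := by ring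
    _ ≤ (p-87/100)^11 * (13/100) := mul_le_mul_of_nonneg_left h1 (pow_nonneg h0 11)
    _ = 13/100 * (p - 87/100)^11 := by ring
  have c12 : (p - 87/100)^13 ≤ 13/100 * (p - 87/100)^12 := by
    calc (p - 87/100)^13 = (p-87/100)^12 * (p-87/100) := by ring
    _ ≤ (p-87/100)^12 * (13/100) := mul_le_mul_of_nonneg_left h1 (pow_nonneg h0 12)
    _ = 13/100 * (p - 87/100)^12 := by ring
  have c13 : (p - 87/100)^14 ≤ 13/100 * (p - 87/100)^13 := by
    calc (p - 87/100)^14 = (p-87/100)^13 * (p-87/100) := by ring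
    _ ≤ (p-87/100)^13 * (13/100) := mul_le_mul_of_nonneg_left h1 (pow_nonneg h0 13)
    _ = 13/100 * (p - 87/100)^13 := by ring
  rw [wHat8, wHat9]
  linarith [pow_nonneg h0 1, pow_nonneg h0 2, pow_nonneg h0 3, pow_nonneg h0 4, pow_nonneg h0 5, pow_nonneg h0 6, pow_nonneg h0 7, pow_nonneg h0 8, pow_nonneg h0 9, pow_nonneg h0 10, pow_nonneg h0 11, pow_nonneg h0 12, pow_nonneg h0 13, pow_nonneg h0 14]

lemma keyB3 (p : ℝ) (hp1 : (87:ℝ)/100 ≤ p) (hp2 : p ≤ 1) : (3:ℝ)/3 ≤ wHat p 3 := by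
  have h0 : (0:ℝ) ≤ p - 87/100 := by linarith
  have h1 : p - 87/100 ≤ 13/100 := by linarith
  have c1 : (p - 87/100)^2 ≤ 13/100 * (p - 87/100)^1 := by
    calc (p - 87/100)^2 = (p-87/100)^1 * (p-87/100) := by ring
    _ ≤ (p-87/100)^1 * (13/100) := mul_le_mul_of_nonneg_left h1 (pow_nonneg h0 1)
    _ = 13/100 * (p - 87/100)^1 := by ring
  have c2 : (p - 87/100)^3 ≤ 13/100 * (p - 87/100)^2 := by
    calc (p - 87/100)^3 = (p-87/100)^2 * (p-87/100) := by ring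
    _ ≤ (p-87/100)^2 * (13/100) := mul_le_mul_of_nonneg_left h1 (pow_nonneg h0 2)
    _ = 13/100 * (p - 87/100)^2 := by ring
  have c3 : (p - 87/100)^4 ≤ 13/100 * (p - 87/100)^3 := by
    calc (p - 87/100)^4 = (p-87/100)^3 * (p-87/100) := by ring
    _ ≤ (p-87/100)^3 * (13/100) := mul_le_mul_of_nonneg_left h1 (pow_nonneg h0 3)
    _ = 13/100 * (p - 87/100)^3 := by ring
  have c4 : (p - 87/100)^5 ≤ 13/100 * (p - 87/100)^4 := by
    calc (p - 87/100)^5 = (p-87/100)^4 * (p-87/100) := by ring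
    _ ≤ (p-87/100)^4 * (13/100) := mul_le_mul_of_nonneg_left h1 (pow_nonneg h0 4)
    _ = 13/100 * (p - 87/100)^4 := by ring
  have c5 : (p - 87/100)^6 ≤ 13/100 * (p - 87/100)^5 := by
    calc (p - 87/100)^6 = (p-87/100)^5 * (p-87/100) := by ring
    _ ≤ (p-87/100)^5 * (13/100) := mul_le_mul_of_nonneg_left h1 (pow_nonneg h0 5)
    _ = 13/100 * (p - 87/100)^5 := by ring
  have c6 : (p - 87/100)^7 ≤ 13/100 * (p - 87/100)^6 := by
    calc (p - 87/100)^7 = (p-87/100)^6 * (p-87/100) := by ring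
    _ ≤ (p-87/100)^6 * (13/100) := mul_le_mul_of_nonneg_left h1 (pow_nonneg h0 6)
    _ = 13/100 * (p - 87/100)^6 := by ring
  have c7 : (p - 87/100)^8 ≤ 13/100 * (p - 87/100)^7 := by
    calc (p - 87/100)^8 = (p-87/100)^7 * (p-87/100) := by ring
    _ ≤ (p-87/100)^7 * (13/100) := mul_le_mul_of_nonneg_left h1 (pow_nonneg h0 7)
    _ = 13/100 * (p - 87/100)^7 := by ring
  have c8 : (p - 87/100)^9 ≤ 13/100 * (p - 87/100)^8 := by
    calc (p - 87/100)^9 = (p-87/100)^8 * (p-87/100) := by ring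
    _ ≤ (p-87/100)^8 * (13/100) := mul_le_mul_of_nonneg_left h1 (pow_nonneg h0 8)
    _ = 13/100 * (p - 87/100)^8 := by ring
  have c9 : (p - 87/100)^10 ≤ 13/100 * (p - 87/100)^9 := by
    calc (p - 87/100)^10 = (p-87/100)^9 * (p-87/100) := by ring
    _ ≤ (p-87/100)^9 * (13/100) := mul_le_mul_of_nonneg_left h1 (pow_nonneg h0 9)
    _ = 13/100 * (p - 87/100)^9 := by ring
  have c10 : (p - 87/100)^11 ≤ 13/100 * (p - 87/100)^10 := by
    calc (p - 87/100)^11 = (p-87/100)^10 * (p-87/100) := by ring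
    _ ≤ (p-87/100)^10 * (13/100) := mul_le_mul_of_nonneg_left h1 (pow_nonneg h0 10)
    _ = 13/100 * (p - 87/100)^10 := by ring
  have c11 : (p - 87/100)^12 ≤ 13/100 * (p - 87/100)^11 := by
    calc (p - 87/100)^12 = (p-87/100)^11 * (p-87/100) := by ring
    _ ≤ (p-87/100)^11 * (13/100) := mul_le_mul_of_nonneg_left h1 (pow_nonneg h0 11)
    _ = 13/100 * (p - 87/100)^11 := by ring
  have c12 : (p - 87/100)^13 ≤ 13/100 * (p - 87/100)^12 := by
    calc (p - 87/100)^13 = (p-87/100)^12 * (p-87/100) := by ring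
    _ ≤ (p-87/100)^12 * (13/100) := mul_le_mul_of_nonneg_left h1 (pow_nonneg h0 12)
    _ = 13/100 * (p - 87/100)^12 := by ring
  have c13 : (p - 87/100)^14 ≤ 13/100 * (p - 87/100)^13 := by
    calc (p - 87/100)^14 = (p-87/100)^13 * (p-87/100) := by ring
    _ ≤ (p-87/100)^13 * (13/100) := mul_le_mul_of_nonneg_left h1 (pow_nonneg h0 13)
    _ = 13/100 * (p - 87/100)^13 := by ring
  rw [wHat3]
  linarith [pow_nonneg h0 1, pow_nonneg h0 2, pow_nonneg h0 3, pow_nonneg h0 4, pow_nonneg h0 5, pow_nonneg h0 6, pow_nonneg h0 7, pow_nonneg h0 8, pow_nonneg h0 9, pow_nonneg h0 10, pow_nonneg h0 11, pow_nonneg h0 12, pow_nonneg h0 13, pow_nonneg h0 14]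

lemma keyB4 (p : ℝ) (hp1 : (87:ℝ)/100 ≤ p) (hp2 : p ≤ 1) : (4:ℝ)/3 ≤ wHat p 4 := by
  have h0 : (0:ℝ) ≤ p - 87/100 := by linarith
  have h1 : p - 87/100 ≤ 13/100 := by linarith
  have c1 : (p - 87/100)^2 ≤ 13/100 * (p - 87/100)^1 := by
    calc (p - 87/100)^2 = (p-87/100)^1 * (p-87/100) := by ring
    _ ≤ (p-87/100)^1 * (13/100) := mul_le_mul_of_nonneg_left h1 (pow_nonneg h0 1)
    _ = 13/100 * (p - 87/100)^1 := by ring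
  have c2 : (p - 87/100)^3 ≤ 13/100 * (p - 87/100)^2 := by
    calc (p - 87/100)^3 = (p-87/100)^2 * (p-87/100) := by ring
    _ ≤ (p-87/100)^2 * (13/100) := mul_le_mul_of_nonneg_left h1 (pow_nonneg h0 2)
    _ = 13/100 * (p - 87/100)^2 := by ring
  have c3 : (p - 87/100)^4 ≤ 13/100 * (p - 87/100)^3 := by
    calc (p - 87/100)^4 = (p-87/100)^3 * (p-87/100) := by ring
    _ ≤ (p-87/100)^3 * (13/100) := mul_le_mul_of_nonneg_left h1 (pow_nonneg h0 3)
    _ = 13/100 * (p - 87/100)^3 := by ring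
  have c4 : (p - 87/100)^5 ≤ 13/100 * (p - 87/100)^4 := by
    calc (p - 87/100)^5 = (p-87/100)^4 * (p-87/100) := by ring
    _ ≤ (p-87/100)^4 * (13/100) := mul_le_mul_of_nonneg_left h1 (pow_nonneg h0 4)
    _ = 13/100 * (p - 87/100)^4 := by ring
  have c5 : (p - 87/100)^6 ≤ 13/100 * (p - 87/100)^5 := by
    calc (p - 87/100)^6 = (p-87/100)^5 * (p-87/100) := by ring
    _ ≤ (p-87/100)^5 * (13/100) := mul_le_mul_of_nonneg_left h1 (pow_nonneg h0 5)
    _ = 13/100 * (p - 87/100)^5 := by ring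
  have c6 : (p - 87/100)^7 ≤ 13/100 * (p - 87/100)^6 := by
    calc (p - 87/100)^7 = (p-87/100)^6 * (p-87/100) := by ring
    _ ≤ (p-87/100)^6 * (13/100) := mul_le_mul_of_nonneg_left h1 (pow_nonneg h0 6)
    _ = 13/100 * (p - 87/100)^6 := by ring
  have c7 : (p - 87/100)^8 ≤ 13/100 * (p - 87/100)^7 := by
    calc (p - 87/100)^8 = (p-87/100)^7 * (p-87/100) := by ring
    _ ≤ (p-87/100)^7 * (13/100) := mul_le_mul_of_nonneg_left h1 (pow_nonneg h0 7)
    _ = 13/100 * (p - 87/100)^7 := by ring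
  have c8 : (p - 87/100)^9 ≤ 13/100 * (p - 87/100)^8 := by
    calc (p - 87/100)^9 = (p-87/100)^8 * (p-87/100) := by ring
    _ ≤ (p-87/100)^8 * (13/100) := mul_le_mul_of_nonneg_left h1 (pow_nonneg h0 8)
    _ = 13/100 * (p - 87/100)^8 := by ring
  have c9 : (p - 87/100)^10 ≤ 13/100 * (p - 87/100)^9 := by
    calc (p - 87/100)^10 = (p-87/100)^9 * (p-87/100) := by ring
    _ ≤ (p-87/100)^9 * (13/100) := mul_le_mul_of_nonneg_left h1 (pow_nonneg h0 9)
    _ = 13/100 * (p - 87/100)^9 := by ring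
  have c10 : (p - 87/100)^11 ≤ 13/100 * (p - 87/100)^10 := by
    calc (p - 87/100)^11 = (p-87/100)^10 * (p-87/100) := by ring
    _ ≤ (p-87/100)^10 * (13/100) := mul_le_mul_of_nonneg_left h1 (pow_nonneg h0 10)
    _ = 13/100 * (p - 87/100)^10 := by ring
  have c11 : (p - 87/100)^12 ≤ 13/100 * (p - 87/100)^11 := by
    calc (p - 87/100)^12 = (p-87/100)^11 * (p-87/100) := by ring
    _ ≤ (p-87/100)^11 * (13/100) := mul_le_mul_of_nonneg_left h1 (pow_nonneg h0 11)
    _ = 13/100 * (p - 87/100)^11 := by ring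
  have c12 : (p - 87/100)^13 ≤ 13/100 * (p - 87/100)^12 := by
    calc (p - 87/100)^13 = (p-87/100)^12 * (p-87/100) := by ring
    _ ≤ (p-87/100)^12 * (13/100) := mul_le_mul_of_nonneg_left h1 (pow_nonneg h0 12)
    _ = 13/100 * (p - 87/100)^12 := by ring
  have c13 : (p - 87/100)^14 ≤ 13/100 * (p - 87/100)^13 := by
    calc (p - 87/100)^14 = (p-87/100)^13 * (p-87/100) := by ring
    _ ≤ (p-87/100)^13 * (13/100) := mul_le_mul_of_nonneg_left h1 (pow_nonneg h0 13)
    _ = 13/100 * (p - 87/100)^13 := by ring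
  rw [wHat4]
  linarith [pow_nonneg h0 1, pow_nonneg h0 2, pow_nonneg h0 3, pow_nonneg h0 4, pow_nonneg h0 5, pow_nonneg h0 6, pow_nonneg h0 7, pow_nonneg h0 8, pow_nonneg h0 9, pow_nonneg h0 10, pow_nonneg h0 11, pow_nonneg h0 12, pow_nonneg h0 13, pow_nonneg h0 14]

lemma keyB5 (p : ℝ) (hp1 : (87:ℝ)/100 ≤ p) (hp2 : p ≤ 1) : (5:ℝ)/3 ≤ wHat p 5 := by
  have h0 : (0:ℝ) ≤ p - 87/100 := by linarith
  have h1 : p - 87/100 ≤ 13/100 := by linarith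
  have c1 : (p - 87/100)^2 ≤ 13/100 * (p - 87/100)^1 := by
    calc (p - 87/100)^2 = (p-87/100)^1 * (p-87/100) := by ring
    _ ≤ (p-87/100)^1 * (13/100) := mul_le_mul_of_nonneg_left h1 (pow_nonneg h0 1)
    _ = 13/100 * (p - 87/100)^1 := by ring
  have c2 : (p - 87/100)^3 ≤ 13/100 * (p - 87/100)^2 := by
    calc (p - 87/100)^3 = (p-87/100)^2 * (p-87/100) := by ring
    _ ≤ (p-87/100)^2 * (13/100) := mul_le_mul_of_nonneg_left h1 (pow_nonneg h0 2)
    _ = 13/100 * (p - 87/100)^2 := by ring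
  have c3 : (p - 87/100)^4 ≤ 13/100 * (p - 87/100)^3 := by
    calc (p - 87/100)^4 = (p-87/100)^3 * (p-87/100) := by ring
    _ ≤ (p-87/100)^3 * (13/100) := mul_le_mul_of_nonneg_left h1 (pow_nonneg h0 3)
    _ = 13/100 * (p - 87/100)^3 := by ring
  have c4 : (p - 87/100)^5 ≤ 13/100 * (p - 87/100)^4 := by
    calc (p - 87/100)^5 = (p-87/100)^4 * (p-87/100) := by ring
    _ ≤ (p-87/100)^4 * (13/100) := mul_le_mul_of_nonneg_left h1 (pow_nonneg h0 4)
    _ = 13/100 * (p - 87/100)^4 := by ring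
  have c5 : (p - 87/100)^6 ≤ 13/100 * (p - 87/100)^5 := by
    calc (p - 87/100)^6 = (p-87/100)^5 * (p-87/100) := by ring
    _ ≤ (p-87/100)^5 * (13/100) := mul_le_mul_of_nonneg_left h1 (pow_nonneg h0 5)
    _ = 13/100 * (p - 87/100)^5 := by ring
  have c6 : (p - 87/100)^7 ≤ 13/100 * (p - 87/100)^6 := by
    calc (p - 87/100)^7 = (p-87/100)^6 * (p-87/100) := by ring
    _ ≤ (p-87/100)^6 * (13/100) := mul_le_mul_of_nonneg_left h1 (pow_nonneg h0 6)
    _ = 13/100 * (p - 87/100)^6 := by ring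
  have c7 : (p - 87/100)^8 ≤ 13/100 * (p - 87/100)^7 := by
    calc (p - 87/100)^8 = (p-87/100)^7 * (p-87/100) := by ring
    _ ≤ (p-87/100)^7 * (13/100) := mul_le_mul_of_nonneg_left h1 (pow_nonneg h0 7)
    _ = 13/100 * (p - 87/100)^7 := by ring
  have c8 : (p - 87/100)^9 ≤ 13/100 * (p - 87/100)^8 := by
    calc (p - 87/100)^9 = (p-87/100)^8 * (p-87/100) := by ring
    _ ≤ (p-87/100)^8 * (13/100) := mul_le_mul_of_nonneg_left h1 (pow_nonneg h0 8)
    _ = 13/100 * (p - 87/100)^8 := by ring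
  have c9 : (p - 87/100)^10 ≤ 13/100 * (p - 87/100)^9 := by
    calc (p - 87/100)^10 = (p-87/100)^9 * (p-87/100) := by ring
    _ ≤ (p-87/100)^9 * (13/100) := mul_le_mul_of_nonneg_left h1 (pow_nonneg h0 9)
    _ = 13/100 * (p - 87/100)^9 := by ring
  have c10 : (p - 87/100)^11 ≤ 13/100 * (p - 87/100)^10 := by
    calc (p - 87/100)^11 = (p-87/100)^10 * (p-87/100) := by ring
    _ ≤ (p-87/100)^10 * (13/100) := mul_le_mul_of_nonneg_left h1 (pow_nonneg h0 10)
    _ = 13/100 * (p - 87/100)^10 := by ring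
  have c11 : (p - 87/100)^12 ≤ 13/100 * (p - 87/100)^11 := by
    calc (p - 87/100)^12 = (p-87/100)^11 * (p-87/100) := by ring
    _ ≤ (p-87/100)^11 * (13/100) := mul_le_mul_of_nonneg_left h1 (pow_nonneg h0 11)
    _ = 13/100 * (p - 87/100)^11 := by ring
  have c12 : (p - 87/100)^13 ≤ 13/100 * (p - 87/100)^12 := by
    calc (p - 87/100)^13 = (p-87/100)^12 * (p-87/100) := by ring
    _ ≤ (p-87/100)^12 * (13/100) := mul_le_mul_of_nonneg_left h1 (pow_nonneg h0 12)
    _ = 13/100 * (p - 87/100)^12 := by ring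
  have c13 : (p - 87/100)^14 ≤ 13/100 * (p - 87/100)^13 := by
    calc (p - 87/100)^14 = (p-87/100)^13 * (p-87/100) := by ring
    _ ≤ (p-87/100)^13 * (13/100) := mul_le_mul_of_nonneg_left h1 (pow_nonneg h0 13)
    _ = 13/100 * (p - 87/100)^13 := by ring
  rw [wHat5]
  linarith [pow_nonneg h0 1, pow_nonneg h0 2, pow_nonneg h0 3, pow_nonneg h0 4, pow_nonneg h0 5, pow_nonneg h0 6, pow_nonneg h0 7, pow_nonneg h0 8, pow_nonneg h0 9, pow_nonneg h0 10, pow_nonneg h0 11, pow_nonneg h0 12, pow_nonneg h0 13, pow_nonneg h0 14]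

lemma keyB6 (p : ℝ) (hp1 : (87:ℝ)/100 ≤ p) (hp2 : p ≤ 1) : (6:ℝ)/3 ≤ wHat p 6 := by
  have h0 : (0:ℝ) ≤ p - 87/100 := by linarith
  have h1 : p - 87/100 ≤ 13/100 := by linarith
  have c1 : (p - 87/100)^2 ≤ 13/100 * (p - 87/100)^1 := by
    calc (p - 87/100)^2 = (p-87/100)^1 * (p-87/100) := by ring
    _ ≤ (p-87/100)^1 * (13/100) := mul_le_mul_of_nonneg_left h1 (pow_nonneg h0 1)
    _ = 13/100 * (p - 87/100)^1 := by ring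
  have c2 : (p - 87/100)^3 ≤ 13/100 * (p - 87/100)^2 := by
    calc (p - 87/100)^3 = (p-87/100)^2 * (p-87/100) := by ring
    _ ≤ (p-87/100)^2 * (13/100) := mul_le_mul_of_nonneg_left h1 (pow_nonneg h0 2)
    _ = 13/100 * (p - 87/100)^2 := by ring
  have c3 : (p - 87/100)^4 ≤ 13/100 * (p - 87/100)^3 := by
    calc (p - 87/100)^4 = (p-87/100)^3 * (p-87/100) := by ring
    _ ≤ (p-87/100)^3 * (13/100) := mul_le_mul_of_nonneg_left h1 (pow_nonneg h0 3)
    _ = 13/100 * (p - 87/100)^3 := by ring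
  have c4 : (p - 87/100)^5 ≤ 13/100 * (p - 87/100)^4 := by
    calc (p - 87/100)^5 = (p-87/100)^4 * (p-87/100) := by ring
    _ ≤ (p-87/100)^4 * (13/100) := mul_le_mul_of_nonneg_left h1 (pow_nonneg h0 4)
    _ = 13/100 * (p - 87/100)^4 := by ring
  have c5 : (p - 87/100)^6 ≤ 13/100 * (p - 87/100)^5 := by
    calc (p - 87/100)^6 = (p-87/100)^5 * (p-87/100) := by ring
    _ ≤ (p-87/100)^5 * (13/100) := mul_le_mul_of_nonneg_left h1 (pow_nonneg h0 5)
    _ = 13/100 * (p - 87/100)^5 := by ring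
  have c6 : (p - 87/100)^7 ≤ 13/100 * (p - 87/100)^6 := by
    calc (p - 87/100)^7 = (p-87/100)^6 * (p-87/100) := by ring
    _ ≤ (p-87/100)^6 * (13/100) := mul_le_mul_of_nonneg_left h1 (pow_nonneg h0 6)
    _ = 13/100 * (p - 87/100)^6 := by ring
  have c7 : (p - 87/100)^8 ≤ 13/100 * (p - 87/100)^7 := by
    calc (p - 87/100)^8 = (p-87/100)^7 * (p-87/100) := by ring
    _ ≤ (p-87/100)^7 * (13/100) := mul_le_mul_of_nonneg_left h1 (pow_nonneg h0 7)
    _ = 13/100 * (p - 87/100)^7 := by ring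
  have c8 : (p - 87/100)^9 ≤ 13/100 * (p - 87/100)^8 := by
    calc (p - 87/100)^9 = (p-87/100)^8 * (p-87/100) := by ring
    _ ≤ (p-87/100)^8 * (13/100) := mul_le_mul_of_nonneg_left h1 (pow_nonneg h0 8)
    _ = 13/100 * (p - 87/100)^8 := by ring
  have c9 : (p - 87/100)^10 ≤ 13/100 * (p - 87/100)^9 := by
    calc (p - 87/100)^10 = (p-87/100)^9 * (p-87/100) := by ring
    _ ≤ (p-87/100)^9 * (13/100) := mul_le_mul_of_nonneg_left h1 (pow_nonneg h0 9)
    _ = 13/100 * (p - 87/100)^9 := by ring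
  have c10 : (p - 87/100)^11 ≤ 13/100 * (p - 87/100)^10 := by
    calc (p - 87/100)^11 = (p-87/100)^10 * (p-87/100) := by ring
    _ ≤ (p-87/100)^10 * (13/100) := mul_le_mul_of_nonneg_left h1 (pow_nonneg h0 10)
    _ = 13/100 * (p - 87/100)^10 := by ring
  have c11 : (p - 87/100)^12 ≤ 13/100 * (p - 87/100)^11 := by
    calc (p - 87/100)^12 = (p-87/100)^11 * (p-87/100) := by ring
    _ ≤ (p-87/100)^11 * (13/100) := mul_le_mul_of_nonneg_left h1 (pow_nonneg h0 11)
    _ = 13/100 * (p - 87/100)^11 := by ring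
  have c12 : (p - 87/100)^13 ≤ 13/100 * (p - 87/100)^12 := by
    calc (p - 87/100)^13 = (p-87/100)^12 * (p-87/100) := by ring
    _ ≤ (p-87/100)^12 * (13/100) := mul_le_mul_of_nonneg_left h1 (pow_nonneg h0 12)
    _ = 13/100 * (p - 87/100)^12 := by ring
  have c13 : (p - 87/100)^14 ≤ 13/100 * (p - 87/100)^13 := by
    calc (p - 87/100)^14 = (p-87/100)^13 * (p-87/100) := by ring
    _ ≤ (p-87/100)^13 * (13/100) := mul_le_mul_of_nonneg_left h1 (pow_nonneg h0 13)
    _ = 13/100 * (p - 87/100)^13 := by ring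
  rw [wHat6]
  linarith [pow_nonneg h0 1, pow_nonneg h0 2, pow_nonneg h0 3, pow_nonneg h0 4, pow_nonneg h0 5, pow_nonneg h0 6, pow_nonneg h0 7, pow_nonneg h0 8, pow_nonneg h0 9, pow_nonneg h0 10, pow_nonneg h0 11, pow_nonneg h0 12, pow_nonneg h0 13, pow_nonneg h0 14]

lemma keyB7 (p : ℝ) (hp1 : (87:ℝ)/100 ≤ p) (hp2 : p ≤ 1) : (7:ℝ)/3 ≤ wHat p 7 := by
  have h0 : (0:ℝ) ≤ p - 87/100 := by linarith
  have h1 : p - 87/100 ≤ 13/100 := by linarith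
  have c1 : (p - 87/100)^2 ≤ 13/100 * (p - 87/100)^1 := by
    calc (p - 87/100)^2 = (p-87/100)^1 * (p-87/100) := by ring
    _ ≤ (p-87/100)^1 * (13/100) := mul_le_mul_of_nonneg_left h1 (pow_nonneg h0 1)
    _ = 13/100 * (p - 87/100)^1 := by ring
  have c2 : (p - 87/100)^3 ≤ 13/100 * (p - 87/100)^2 := by
    calc (p - 87/100)^3 = (p-87/100)^2 * (p-87/100) := by ring
    _ ≤ (p-87/100)^2 * (13/100) := mul_le_mul_of_nonneg_left h1 (pow_nonneg h0 2)
    _ = 13/100 * (p - 87/100)^2 := by ring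
  have c3 : (p - 87/100)^4 ≤ 13/100 * (p - 87/100)^3 := by
    calc (p - 87/100)^4 = (p-87/100)^3 * (p-87/100) := by ring
    _ ≤ (p-87/100)^3 * (13/100) := mul_le_mul_of_nonneg_left h1 (pow_nonneg h0 3)
    _ = 13/100 * (p - 87/100)^3 := by ring
  have c4 : (p - 87/100)^5 ≤ 13/100 * (p - 87/100)^4 := by
    calc (p - 87/100)^5 = (p-87/100)^4 * (p-87/100) := by ring
    _ ≤ (p-87/100)^4 * (13/100) := mul_le_mul_of_nonneg_left h1 (pow_nonneg h0 4)
    _ = 13/100 * (p - 87/100)^4 := by ring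
  have c5 : (p - 87/100)^6 ≤ 13/100 * (p - 87/100)^5 := by
    calc (p - 87/100)^6 = (p-87/100)^5 * (p-87/100) := by ring
    _ ≤ (p-87/100)^5 * (13/100) := mul_le_mul_of_nonneg_left h1 (pow_nonneg h0 5)
    _ = 13/100 * (p - 87/100)^5 := by ring
  have c6 : (p - 87/100)^7 ≤ 13/100 * (p - 87/100)^6 := by
    calc (p - 87/100)^7 = (p-87/100)^6 * (p-87/100) := by ring
    _ ≤ (p-87/100)^6 * (13/100) := mul_le_mul_of_nonneg_left h1 (pow_nonneg h0 6)
    _ = 13/100 * (p - 87/100)^6 := by ring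
  have c7 : (p - 87/100)^8 ≤ 13/100 * (p - 87/100)^7 := by
    calc (p - 87/100)^8 = (p-87/100)^7 * (p-87/100) := by ring
    _ ≤ (p-87/100)^7 * (13/100) := mul_le_mul_of_nonneg_left h1 (pow_nonneg h0 7)
    _ = 13/100 * (p - 87/100)^7 := by ring
  have c8 : (p - 87/100)^9 ≤ 13/100 * (p - 87/100)^8 := by
    calc (p - 87/100)^9 = (p-87/100)^8 * (p-87/100) := by ring
    _ ≤ (p-87/100)^8 * (13/100) := mul_le_mul_of_nonneg_left h1 (pow_nonneg h0 8)
    _ = 13/100 * (p - 87/100)^8 := by ring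
  have c9 : (p - 87/100)^10 ≤ 13/100 * (p - 87/100)^9 := by
    calc (p - 87/100)^10 = (p-87/100)^9 * (p-87/100) := by ring
    _ ≤ (p-87/100)^9 * (13/100) := mul_le_mul_of_nonneg_left h1 (pow_nonneg h0 9)
    _ = 13/100 * (p - 87/100)^9 := by ring
  have c10 : (p - 87/100)^11 ≤ 13/100 * (p - 87/100)^10 := by
    calc (p - 87/100)^11 = (p-87/100)^10 * (p-87/100) := by ring
    _ ≤ (p-87/100)^10 * (13/100) := mul_le_mul_of_nonneg_left h1 (pow_nonneg h0 10)
    _ = 13/100 * (p - 87/100)^10 := by ring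
  have c11 : (p - 87/100)^12 ≤ 13/100 * (p - 87/100)^11 := by
    calc (p - 87/100)^12 = (p-87/100)^11 * (p-87/100) := by ring
    _ ≤ (p-87/100)^11 * (13/100) := mul_le_mul_of_nonneg_left h1 (pow_nonneg h0 11)
    _ = 13/100 * (p - 87/100)^11 := by ring
  have c12 : (p - 87/100)^13 ≤ 13/100 * (p - 87/100)^12 := by
    calc (p - 87/100)^13 = (p-87/100)^12 * (p-87/100) := by ring
    _ ≤ (p-87/100)^12 * (13/100) := mul_le_mul_of_nonneg_left h1 (pow_nonneg h0 12)
    _ = 13/100 * (p - 87/100)^12 := by ring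
  have c13 : (p - 87/100)^14 ≤ 13/100 * (p - 87/100)^13 := by
    calc (p - 87/100)^14 = (p-87/100)^13 * (p-87/100) := by ring
    _ ≤ (p-87/100)^13 * (13/100) := mul_le_mul_of_nonneg_left h1 (pow_nonneg h0 13)
    _ = 13/100 * (p - 87/100)^13 := by ring
  rw [wHat7]
  linarith [pow_nonneg h0 1, pow_nonneg h0 2, pow_nonneg h0 3, pow_nonneg h0 4, pow_nonneg h0 5, pow_nonneg h0 6, pow_nonneg h0 7, pow_nonneg h0 8, pow_nonneg h0 9, pow_nonneg h0 10, pow_nonneg h0 11, pow_nonneg h0 12, pow_nonneg h0 13, pow_nonneg h0 14]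

lemma keyB8 (p : ℝ) (hp1 : (87:ℝ)/100 ≤ p) (hp2 : p ≤ 1) : (8:ℝ)/3 ≤ wHat p 8 := by
  have h0 : (0:ℝ) ≤ p - 87/100 := by linarith
  have h1 : p - 87/100 ≤ 13/100 := by linarith
  have c1 : (p - 87/100)^2 ≤ 13/100 * (p - 87/100)^1 := by
    calc (p - 87/100)^2 = (p-87/100)^1 * (p-87/100) := by ring
    _ ≤ (p-87/100)^1 * (13/100) := mul_le_mul_of_nonneg_left h1 (pow_nonneg h0 1)
    _ = 13/100 * (p - 87/100)^1 := by ring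
  have c2 : (p - 87/100)^3 ≤ 13/100 * (p - 87/100)^2 := by
    calc (p - 87/100)^3 = (p-87/100)^2 * (p-87/100) := by ring
    _ ≤ (p-87/100)^2 * (13/100) := mul_le_mul_of_nonneg_left h1 (pow_nonneg h0 2)
    _ = 13/100 * (p - 87/100)^2 := by ring
  have c3 : (p - 87/100)^4 ≤ 13/100 * (p - 87/100)^3 := by
    calc (p - 87/100)^4 = (p-87/100)^3 * (p-87/100) := by ring
    _ ≤ (p-87/100)^3 * (13/100) := mul_le_mul_of_nonneg_left h1 (pow_nonneg h0 3)
    _ = 13/100 * (p - 87/100)^3 := by ring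
  have c4 : (p - 87/100)^5 ≤ 13/100 * (p - 87/100)^4 := by
    calc (p - 87/100)^5 = (p-87/100)^4 * (p-87/100) := by ring
    _ ≤ (p-87/100)^4 * (13/100) := mul_le_mul_of_nonneg_left h1 (pow_nonneg h0 4)
    _ = 13/100 * (p - 87/100)^4 := by ring
  have c5 : (p - 87/100)^6 ≤ 13/100 * (p - 87/100)^5 := by
    calc (p - 87/100)^6 = (p-87/100)^5 * (p-87/100) := by ring
    _ ≤ (p-87/100)^5 * (13/100) := mul_le_mul_of_nonneg_left h1 (pow_nonneg h0 5)
    _ = 13/100 * (p - 87/100)^5 := by ring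
  have c6 : (p - 87/100)^7 ≤ 13/100 * (p - 87/100)^6 := by
    calc (p - 87/100)^7 = (p-87/100)^6 * (p-87/100) := by ring
    _ ≤ (p-87/100)^6 * (13/100) := mul_le_mul_of_nonneg_left h1 (pow_nonneg h0 6)
    _ = 13/100 * (p - 87/100)^6 := by ring
  have c7 : (p - 87/100)^8 ≤ 13/100 * (p - 87/100)^7 := by
    calc (p - 87/100)^8 = (p-87/100)^7 * (p-87/100) := by ring
    _ ≤ (p-87/100)^7 * (13/100) := mul_le_mul_of_nonneg_left h1 (pow_nonneg h0 7)
    _ = 13/100 * (p - 87/100)^7 := by ring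
  have c8 : (p - 87/100)^9 ≤ 13/100 * (p - 87/100)^8 := by
    calc (p - 87/100)^9 = (p-87/100)^8 * (p-87/100) := by ring
    _ ≤ (p-87/100)^8 * (13/100) := mul_le_mul_of_nonneg_left h1 (pow_nonneg h0 8)
    _ = 13/100 * (p - 87/100)^8 := by ring
  have c9 : (p - 87/100)^10 ≤ 13/100 * (p - 87/100)^9 := by
    calc (p - 87/100)^10 = (p-87/100)^9 * (p-87/100) := by ring
    _ ≤ (p-87/100)^9 * (13/100) := mul_le_mul_of_nonneg_left h1 (pow_nonneg h0 9)
    _ = 13/100 * (p - 87/100)^9 := by ring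
  have c10 : (p - 87/100)^11 ≤ 13/100 * (p - 87/100)^10 := by
    calc (p - 87/100)^11 = (p-87/100)^10 * (p-87/100) := by ring
    _ ≤ (p-87/100)^10 * (13/100) := mul_le_mul_of_nonneg_left h1 (pow_nonneg h0 10)
    _ = 13/100 * (p - 87/100)^10 := by ring
  have c11 : (p - 87/100)^12 ≤ 13/100 * (p - 87/100)^11 := by
    calc (p - 87/100)^12 = (p-87/100)^11 * (p-87/100) := by ring
    _ ≤ (p-87/100)^11 * (13/100) := mul_le_mul_of_nonneg_left h1 (pow_nonneg h0 11)
    _ = 13/100 * (p - 87/100)^11 := by ring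
  have c12 : (p - 87/100)^13 ≤ 13/100 * (p - 87/100)^12 := by
    calc (p - 87/100)^13 = (p-87/100)^12 * (p-87/100) := by ring
    _ ≤ (p-87/100)^12 * (13/100) := mul_le_mul_of_nonneg_left h1 (pow_nonneg h0 12)
    _ = 13/100 * (p - 87/100)^12 := by ring
  have c13 : (p - 87/100)^14 ≤ 13/100 * (p - 87/100)^13 := by
    calc (p - 87/100)^14 = (p-87/100)^13 * (p-87/100) := by ring
    _ ≤ (p-87/100)^13 * (13/100) := mul_le_mul_of_nonneg_left h1 (pow_nonneg h0 13)
    _ = 13/100 * (p - 87/100)^13 := by ring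
  rw [wHat8]
  linarith [pow_nonneg h0 1, pow_nonneg h0 2, pow_nonneg h0 3, pow_nonneg h0 4, pow_nonneg h0 5, pow_nonneg h0 6, pow_nonneg h0 7, pow_nonneg h0 8, pow_nonneg h0 9, pow_nonneg h0 10, pow_nonneg h0 11, pow_nonneg h0 12, pow_nonneg h0 13, pow_nonneg h0 14]
lemma gStrict (p : ℝ) (ℓ : ℕ) (h1 : 1 ≤ ℓ) (h2 : ℓ < ell0 p) :
    gSeq p (ℓ + 1) < gSeq p ℓ := by
  have h := Nat.notMem_of_lt_sInf (s := {ℓ : ℕ | 1 ≤ ℓ ∧ gSeq p ℓ ≤ gSeq p (ℓ + 1)}) h2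
  simp only [Set.mem_setOf_eq, not_and] at h
  exact lt_of_not_ge (h h1)

lemma gAnti (p : ℝ) : ∀ a b : ℕ, 1 ≤ a → a ≤ b → b ≤ ell0 p → gSeq p b ≤ gSeq p a := by
  intro a b h1 hab hb
  induction b with
  | zero => omega
  | succ b ih =>
    rcases Nat.eq_or_lt_of_le hab with h | h
    · rw [h]
    · have hs := gStrict p b (by omega) (by omega)
      exact le_trans (le_of_lt hs) (ih (by omega) (by omega))

lemma runLen_spec {n : ℕ} [NeZero n] (S : Config n) (i : ZMod n) (hi : S i = false)
    (j : ZMod n) (hj : S j = true) :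
    1 ≤ runLen S i ∧ runLen S i < n ∧ S (i + (runLen S i : ZMod n)) = true := by
  have hij : j ≠ i := by intro h; rw [h, hi] at hj; simp at hj
  have hsub : j - i ≠ 0 := sub_ne_zero.mpr hij
  have hne : ((j - i).val) ∈ {m : ℕ | 1 ≤ m ∧ S (i + (m : ZMod n)) = true} := by
    constructor
    · have : (j - i).val ≠ 0 := fun h => hsub ((ZMod.val_eq_zero _).mp h)
      omega
    · rw [ZMod.natCast_rightInverse (j - i)]
      simpa [add_sub_cancel] using hj
  have hmem := Nat.sInf_mem ⟨_, hne⟩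
  have hle := Nat.sInf_le hne
  exact ⟨hmem.1, lt_of_le_of_lt hle (ZMod.val_lt _), hmem.2⟩

lemma runLen_false {n : ℕ} [NeZero n] (S : Config n) (i : ZMod n) (hi : S i = false)
    (k : ℕ) (hk : k < runLen S i) : S (i + (k : ZMod n)) = false := by
  rcases Nat.eq_zero_or_pos k with h | h
  · subst h; simpa using hi
  · have hmem := Nat.notMem_of_lt_sInf (s := {m : ℕ | 1 ≤ m ∧ S (i + (m : ZMod n)) = true}) hk
    simp only [Set.mem_setOf_eq, not_and] at hmem
    have := hmem h
    simpa using this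

lemma runs_aux {n : ℕ} [NeZero n] (S : Config n) (i i' : ZMod n)
    (hi : S i = false ∧ S (i - 1) = true) (hi' : S i' = false ∧ S (i' - 1) = true)
    (k k' : ℕ) (hk : k < runLen S i) (hk' : k' < runLen S i')
    (heq : i + (k : ZMod n) = i' + (k' : ZMod n)) (hlt : k < k') : False := by
  have hcast : ((k' - k - 1 : ℕ) : ZMod n) = (k' : ZMod n) - k - 1 := by
    have h : k' - k - 1 + (k + 1) = k' := by omega
    have := congrArg (fun m : ℕ => (m : ZMod n)) h
    push_cast at this
    linear_combination this
  have h1 : i - 1 = i' + ((k' - k - 1 : ℕ) : ZMod n) := by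
    rw [hcast]; linear_combination heq
  have h2 : S (i' + ((k' - k - 1 : ℕ) : ZMod n)) = false :=
    runLen_false S i' hi'.1 _ (by omega)
  rw [← h1, hi.2] at h2
  simp at h2

lemma runs_inj {n : ℕ} [NeZero n] (S : Config n) (i i' : ZMod n)
    (hi : S i = false ∧ S (i - 1) = true) (hi' : S i' = false ∧ S (i' - 1) = true)
    (k k' : ℕ) (hk : k < runLen S i) (hk' : k' < runLen S i')
    (heq : i + (k : ZMod n) = i' + (k' : ZMod n)) : i = i' ∧ k = k' := by
  rcases lt_trichotomy k k' with h | h | h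
  · exact absurd (runs_aux S i i' hi hi' k k' hk hk' heq h) (by simp)
  · subst h
    refine ⟨?_, rfl⟩
    have := add_right_cancel heq
    exact this
  · exact absurd (runs_aux S i' i hi' hi k' k hk' hk heq.symm h) (by simp)

lemma exists_start {n : ℕ} [NeZero n] (S : Config n) (v : ZMod n) (hv : S v = false)
    (u : ZMod n) (hu : S u = true) : ∃ i, S i = false ∧ S (i - 1) = true := by
  have hvu : v ≠ u := by intro h; rw [h, hu] at hv; simp at hv
  have hsub : v - u ≠ 0 := sub_ne_zero.mpr hvu
  have hBne : (v - u).val ∈ {m : ℕ | 1 ≤ m ∧ S (v - (m : ZMod n)) = true} := by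
    constructor
    · have : (v - u).val ≠ 0 := fun h => hsub ((ZMod.val_eq_zero _).mp h)
      omega
    · rw [ZMod.natCast_rightInverse (v - u)]
      simpa [sub_sub_cancel] using hu
  obtain ⟨m0, hm0def⟩ : ∃ m, m = sInf {m : ℕ | 1 ≤ m ∧ S (v - (m : ZMod n)) = true} := ⟨_, rfl⟩
  have hm0 : 1 ≤ m0 ∧ S (v - (m0 : ZMod n)) = true := by rw [hm0def]; exact Nat.sInf_mem ⟨_, hBne⟩
  refine ⟨v - (m0 : ZMod n) + 1, ?_, ?_⟩
  · rcases Nat.eq_or_lt_of_le hm0.1 with h | h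
    · have : v - (m0 : ZMod n) + 1 = v := by rw [← h]; push_cast; ring
      rw [this]; exact hv
    · have hlt2 : m0 - 1 < sInf {m : ℕ | 1 ≤ m ∧ S (v - (m : ZMod n)) = true} := by
        rw [← hm0def]; omega
      have hnm := Nat.notMem_of_lt_sInf hlt2
      simp only [Set.mem_setOf_eq, not_and] at hnm
      have h2 := hnm (by omega)
      have hcast : ((m0 - 1 : ℕ) : ZMod n) = (m0 : ZMod n) - 1 := by
        have h : m0 - 1 + 1 = m0 := by omega
        have := congrArg (fun m : ℕ => (m : ZMod n)) h
        push_cast at this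
        linear_combination this
      have : v - (m0 : ZMod n) + 1 = v - ((m0 - 1 : ℕ) : ZMod n) := by
        rw [hcast]; ring
      rw [this]
      simpa using h2
  · have : v - (m0 : ZMod n) + 1 - 1 = v - (m0 : ZMod n) := by ring
    rw [this]
    exact hm0.2

/-- For `p ∈ [0.870, 1]`: `α ≤ 1` and `α·ℓ ≤ w_ℓ ≤ ℓ` for all `ℓ ≥ 1`; consequently
`W(S) ≤ n` for every configuration `S` on the `n`-cycle (`n ≥ 3`); moreover `w_1 = 1`,
so `W(S) ≥ 1` whenever `S` is not the constant-true configuration. -/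
theorem potential_bounds (p : ℝ) (hp : p ∈ Set.Icc (0.870 : ℝ) 1) :
    alphaMin p ≤ 1 ∧
      (∀ ℓ : ℕ, 1 ≤ ℓ → alphaMin p * (ℓ : ℝ) ≤ wSeq p ℓ ∧ wSeq p ℓ ≤ (ℓ : ℝ)) ∧
      wSeq p 1 = 1 ∧
      ∀ (n : ℕ) [NeZero n], 3 ≤ n → ∀ S : Config n,
        potential (wSeq p) S ≤ (n : ℝ) ∧
          ((S ≠ fun _ => true) → 1 ≤ potential (wSeq p) S) := by
  obtain ⟨hp1', hp2⟩ := hp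
  have hp1 : (87:ℝ)/100 ≤ p := by norm_num at hp1' ⊢; linarith
  have hwv1 : wHat p 1 = 1 := by simp [wHat]
  have hwv2 : wHat p 2 = 1 := by simp [wHat]
  have g1 : gSeq p 1 = 1 := by simp [gSeq, hwv1]
  have g2 : gSeq p 2 = 1/2 := by rw [gSeq, hwv2]; norm_num
  have hset : (8:ℕ) ∈ {ℓ : ℕ | 1 ≤ ℓ ∧ gSeq p ℓ ≤ gSeq p (ℓ + 1)} := by
    refine ⟨by norm_num, ?_⟩
    have h9 : gSeq p (8 + 1) = wHat p 9 / 9 := by norm_num [gSeq]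
    have h8 : gSeq p 8 = wHat p 8 / 8 := by norm_num [gSeq]
    rw [h8, h9, div_le_div_iff₀ (by norm_num) (by norm_num)]
    linarith [keyA p hp1 hp2]
  have hne : {ℓ : ℕ | 1 ≤ ℓ ∧ gSeq p ℓ ≤ gSeq p (ℓ + 1)}.Nonempty := ⟨8, hset⟩
  have hmem : ell0 p ∈ {ℓ : ℕ | 1 ≤ ℓ ∧ gSeq p ℓ ≤ gSeq p (ℓ + 1)} := Nat.sInf_mem hne
  have hl8 : ell0 p ≤ 8 := Nat.sInf_le hset
  have hl1 : 1 ≤ ell0 p := hmem.1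
  have hl2 : 2 ≤ ell0 p := by
    rcases Nat.eq_or_lt_of_le hl1 with h | h
    · exfalso
      have h2 := hmem.2
      rw [← h] at h2
      norm_num [g1, g2] at h2
    · omega
  have halpha_le : ∀ ℓ : ℕ, 1 ≤ ℓ → ℓ ≤ ell0 p → alphaMin p ≤ gSeq p ℓ :=
    fun ℓ h1 h2 => gAnti p ℓ (ell0 p) h1 h2 le_rfl
  have hg_le1 : ∀ ℓ : ℕ, 1 ≤ ℓ → ℓ ≤ ell0 p → gSeq p ℓ ≤ 1 := by
    intro ℓ h1 h2
    rw [← g1]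
    exact gAnti p 1 ℓ le_rfl h1 h2
  have hα1 : alphaMin p ≤ 1 := by
    rw [show alphaMin p = gSeq p (ell0 p) from rfl, ← g1]
    exact gAnti p 1 (ell0 p) le_rfl hl1 le_rfl
  have hα3 : (1:ℝ)/3 ≤ alphaMin p := by
    have heq : alphaMin p = wHat p (ell0 p) / ((ell0 p : ℕ) : ℝ) := rfl
    rw [heq]
    obtain ⟨k, hk⟩ : ∃ k, k = ell0 p := ⟨_, rfl⟩
    have h2 : 2 ≤ k := hk ▸ hl2
    have h8 : k ≤ 8 := hk ▸ hl8
    rw [← hk]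
    interval_cases k
    · rw [hwv2]; norm_num
    · rw [le_div_iff₀ (by norm_num)]; push_cast; linarith [keyB3 p hp1 hp2]
    · rw [le_div_iff₀ (by norm_num)]; push_cast; linarith [keyB4 p hp1 hp2]
    · rw [le_div_iff₀ (by norm_num)]; push_cast; linarith [keyB5 p hp1 hp2]
    · rw [le_div_iff₀ (by norm_num)]; push_cast; linarith [keyB6 p hp1 hp2]
    · rw [le_div_iff₀ (by norm_num)]; push_cast; linarith [keyB7 p hp1 hp2]
    · rw [le_div_iff₀ (by norm_num)]; push_cast; linarith [keyB8 p hp1 hp2]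
  have hw_lo : ∀ ℓ : ℕ, 1 ≤ ℓ → alphaMin p * (ℓ:ℝ) ≤ wSeq p ℓ := by
    intro ℓ h1
    simp only [wSeq]
    split_ifs with h
    · have hg := halpha_le ℓ h1 h
      have hpos : (0:ℝ) < (ℓ:ℝ) := by exact_mod_cast Nat.pos_of_ne_zero (by omega)
      simp only [gSeq] at hg
      rw [le_div_iff₀ hpos] at hg
      linarith
    · exact le_rfl
  have hw_up : ∀ ℓ : ℕ, 1 ≤ ℓ → wSeq p ℓ ≤ (ℓ:ℝ) := by
    intro ℓ h1
    simp only [wSeq]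
    split_ifs with h
    · have hg := hg_le1 ℓ h1 h
      have hpos : (0:ℝ) < (ℓ:ℝ) := by exact_mod_cast Nat.pos_of_ne_zero (by omega)
      simp only [gSeq] at hg
      rw [div_le_one hpos] at hg
      exact hg
    · have hc : (0:ℝ) ≤ (ℓ:ℝ) := Nat.cast_nonneg _
      nlinarith
  have hw1 : wSeq p 1 = 1 := by
    simp only [wSeq]
    rw [if_pos (by omega : 1 ≤ ell0 p)]
    exact hwv1
  have hw_ge1 : ∀ ℓ : ℕ, 1 ≤ ℓ → 1 ≤ wSeq p ℓ := by
    intro ℓ h1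
    match ℓ, h1 with
    | 1, _ => rw [hw1]
    | 2, _ =>
      simp only [wSeq]
      rw [if_pos hl2, hwv2]
    | (m+3), _ =>
      have hlo := hw_lo (m+3) (by omega)
      have hc : (3:ℝ) ≤ ((m+3:ℕ):ℝ) := by
        push_cast
        linarith [Nat.cast_nonneg (α := ℝ) m]
      have hmul : (1:ℝ)/3 * 3 ≤ alphaMin p * ((m+3:ℕ):ℝ) :=
        mul_le_mul hα3 hc (by norm_num) (le_trans (by norm_num) hα3)
      linarith
  refine ⟨hα1, fun ℓ h1 => ⟨hw_lo ℓ h1, hw_up ℓ h1⟩, hw1, ?_⟩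
  intro n inst hn3 S
  by_cases hf : S = fun _ => false
  · constructor
    · simp only [potential, if_pos hf]
      exact hw_up n (by omega)
    · intro _
      simp only [potential, if_pos hf]
      exact hw_ge1 n (by omega)
  · have huex : ∃ u, S u = true := by
      by_contra h
      push_neg at h
      exact hf (funext fun v => by
        have := h v
        simp only [ne_eq, Bool.not_eq_true] at this
        exact this)
    obtain ⟨u, hu⟩ := huex
    simp only [potential, if_neg hf]
    have hstart_len : ∀ i : ZMod n, S i = false → 1 ≤ runLen S i ∧ runLen S i < n :=
      fun i hi => ⟨(runLen_spec S i hi u hu).1, (runLen_spec S i hi u hu).2.1⟩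
    set A : Finset (ZMod n) := Finset.univ.filter (fun i => S i = false ∧ S (i - 1) = true)
      with hA
    have hsum_nat : ∑ i ∈ A, runLen S i ≤ n := by
      have hinj : ∀ i ∈ A,
          ((Finset.range (runLen S i)).image (fun k : ℕ => i + (k : ZMod n))).card = runLen S i := by
        intro i hi
        rw [Finset.card_image_of_injOn, Finset.card_range]
        intro a ha b hb hab
        simp only [Finset.coe_range, Set.mem_Iio] at ha hb
        have hi' : S i = false := (Finset.mem_filter.mp hi).2.1
        have hlt := (hstart_len i hi').2
        have h1 : ((a : ZMod n)) = (b : ZMod n) := add_left_cancel hab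
        have h2 := congrArg ZMod.val h1
        rwa [ZMod.val_cast_of_lt (by omega), ZMod.val_cast_of_lt (by omega)] at h2
      have hdisj : ∀ i ∈ A, ∀ i' ∈ A, i ≠ i' →
          Disjoint ((Finset.range (runLen S i)).image (fun k : ℕ => i + (k : ZMod n)))
            ((Finset.range (runLen S i')).image (fun k : ℕ => i' + (k : ZMod n))) := by
        intro i hi i' hi' hne'
        rw [Finset.disjoint_left]
        intro x hx hx'
        simp only [Finset.mem_image, Finset.mem_range] at hx hx'
        obtain ⟨k, hk, hkx⟩ := hx
        obtain ⟨k', hk', hkx'⟩ := hx'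
        have := runs_inj S i i' (Finset.mem_filter.mp hi).2 (Finset.mem_filter.mp hi').2
          k k' hk hk' (hkx.trans hkx'.symm)
        exact hne' this.1
      calc ∑ i ∈ A, runLen S i
          = ∑ i ∈ A, ((Finset.range (runLen S i)).image (fun k : ℕ => i + (k : ZMod n))).card :=
            Finset.sum_congr rfl fun i hi => (hinj i hi).symm
        _ = (A.biUnion fun i => (Finset.range (runLen S i)).image (fun k : ℕ => i + (k : ZMod n))).card :=
            (Finset.card_biUnion hdisj).symm
        _ ≤ Fintype.card (ZMod n) := Finset.card_le_univ _
        _ = n := ZMod.card n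
    constructor
    · calc (∑ i : ZMod n, if S i = false ∧ S (i - 1) = true then wSeq p (runLen S i) else 0)
          ≤ ∑ i : ZMod n, (if S i = false ∧ S (i - 1) = true then (runLen S i : ℝ) else 0) := by
            apply Finset.sum_le_sum
            intro i _
            split_ifs with h
            · exact hw_up _ (hstart_len i h.1).1
            · exact le_rfl
        _ = ∑ i ∈ A, (runLen S i : ℝ) := by rw [hA, Finset.sum_filter]
        _ = ((∑ i ∈ A, runLen S i : ℕ) : ℝ) := by push_cast; rfl
        _ ≤ (n:ℝ) := by exact_mod_cast hsum_nat
    · intro hT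
      have hvex : ∃ v, S v = false := by
        by_contra h
        push_neg at h
        exact hT (funext fun i => by
          have := h i
          simp only [ne_eq, Bool.not_eq_false] at this
          exact this)
      obtain ⟨v, hv⟩ := hvex
      obtain ⟨i0, hi0⟩ := exists_start S v hv u hu
      have hnn : ∀ i ∈ (Finset.univ : Finset (ZMod n)),
          (0:ℝ) ≤ if S i = false ∧ S (i - 1) = true then wSeq p (runLen S i) else 0 := by
        intro i _
        split_ifs with h
        · linarith [hw_ge1 _ (hstart_len i h.1).1]
        · exact le_rfl
      have hterm : (1:ℝ) ≤ if S i0 = false ∧ S (i0 - 1) = true then wSeq p (runLen S i0) else 0 := by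
        rw [if_pos hi0]
        exact hw_ge1 _ (hstart_len i0 hi0.1).1
      calc (1:ℝ) ≤ _ := hterm
        _ ≤ ∑ i : ZMod n, (if S i = false ∧ S (i - 1) = true then wSeq p (runLen S i) else 0) :=
            Finset.single_le_sum hnn (Finset.mem_univ i0)
end
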